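/- arXiv:2605.20216 — 7 statements merged into one kernel-verified Lean document; each statement's English description precedes it below -/
import Mathlib

section
/- Let Q be a cyclic convex quadrilateral in ℝ² that is not a parallelogram. Then Q is a Besant quadrilateral if and only if Q is orthodiagonal, i.e., there exists a non-circular ellipse inscribed in Q with one focus at the circumcenter EP of Q if and only if the diagonals of Q are perpendicular. -/
open Set

noncomputable section

/-- Points of the ellipse with foci `f₁`, `f₂` and major-axis length `2*a`. -/
def EllipseSet (f₁ f₂ : ℂ) (a : ℝ) : Set ℂ := {z : ℂ | dist z f₁ + dist z f₂ = 2 * a}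

/-- `E` is the (possibly circular) ellipse with foci `f₁, f₂` and semi-major axis `a`.
It is a circle precisely when `f₁ = f₂`. -/
def IsEllipse (E : Set ℂ) (f₁ f₂ : ℂ) (a : ℝ) : Prop :=
  dist f₁ f₂ < 2 * a ∧ E = EllipseSet f₁ f₂ a

/-- The full line through `P` and `Q`. -/
def LineThrough (P Q : ℂ) : Set ℂ := {z : ℂ | ∃ θ : ℝ, z = P + θ • (Q - P)}

/-- `E` is tangent to the side `[P,Q]` at `ζ`: the line through `P` and `Q` meets `E`
in the single point `ζ`, which lies on the closed segment `[P,Q]`. -/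
def TangentToSideAt (E : Set ℂ) (P Q ζ : ℂ) : Prop :=
  ζ ∈ segment ℝ P Q ∧ E ∩ LineThrough P Q = {ζ}

/-- `E` is tangent to the side `[P,Q]`. -/
def TangentToSide (E : Set ℂ) (P Q : ℂ) : Prop := ∃ ζ, TangentToSideAt E P Q ζ

/-- A curve `E` is inscribed in the quadrilateral `A₁A₂A₃A₄` (vertices in order)
if it is tangent to each of the four sides. -/
def InscribedInQuad (E : Set ℂ) (A₁ A₂ A₃ A₄ : ℂ) : Prop :=
  TangentToSide E A₁ A₂ ∧ TangentToSide E A₂ A₃ ∧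
    TangentToSide E A₃ A₄ ∧ TangentToSide E A₄ A₁

/-- `A₁A₂A₃A₄` is a convex quadrilateral with the vertices listed in cyclic order:
the four points are in convex position and the diagonals `A₁A₃`, `A₂A₄` meet. -/
def IsConvexQuad (A₁ A₂ A₃ A₄ : ℂ) : Prop :=
  A₁ ∉ convexHull ℝ ({A₂, A₃, A₄} : Set ℂ) ∧
  A₂ ∉ convexHull ℝ ({A₁, A₃, A₄} : Set ℂ) ∧
  A₃ ∉ convexHull ℝ ({A₁, A₂, A₄} : Set ℂ) ∧
  A₄ ∉ convexHull ℝ ({A₁, A₂, A₃} : Set ℂ) ∧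
  (segment ℝ A₁ A₃ ∩ segment ℝ A₂ A₄).Nonempty

def IsParallelogram (A₁ A₂ A₃ A₄ : ℂ) : Prop := A₁ + A₃ = A₂ + A₄

/-- The diagonals `A₁A₃` and `A₂A₄` are perpendicular. -/
def Orthodiagonal (A₁ A₂ A₃ A₄ : ℂ) : Prop :=
  (A₃ - A₁).re * (A₄ - A₂).re + (A₃ - A₁).im * (A₄ - A₂).im = 0

/-- `P` is equidistant from the four points (the circumcenter, when they are concyclic). -/
def IsCircCenter (P A₁ A₂ A₃ A₄ : ℂ) : Prop :=
  dist P A₁ = dist P A₂ ∧ dist P A₂ = dist P A₃ ∧ dist P A₃ = dist P A₄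

/-- `P` is the intersection point of the diagonals `A₁A₃` and `A₂A₄`. -/
def IsDiagPoint (P A₁ A₂ A₃ A₄ : ℂ) : Prop :=
  P ∈ segment ℝ A₁ A₃ ∧ P ∈ segment ℝ A₂ A₄

/-- The plane vectors `z` and `w` are parallel. -/
def Para (z w : ℂ) : Prop := z.re * w.im = z.im * w.re

/-- The quadrilateral `A₁A₂A₃A₄` has (at least) one pair of parallel opposite sides. -/
def IsTrapezoid (A₁ A₂ A₃ A₄ : ℂ) : Prop :=
  Para (A₂ - A₁) (A₄ - A₃) ∨ Para (A₃ - A₂) (A₁ - A₄)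


/-!
Reflecting one focus of an ellipse in a tangent line gives a point at distance `2a` from the
other focus, and a line is tangent exactly when this happens. The mirror image of the circumcenter
`O` in the side `A B` is `A + B - O`. Hence an inscribed ellipse with foci `O` and `g` exists only
if `g` is equidistant from the four points `Aᵢ + Aᵢ₊₁ - O`. They form a parallelogram whose
diagonals are `±(p + q)` and `±(p - q)`, where `p`, `q` are the diagonals of the quadrilateral.
A parallelogram with non-parallel diagonals is inscribed in a circle only if those diagonals have
equal length, and `‖p + q‖ = ‖p - q‖` means `p ⊥ q`.

Conversely, if `p ⊥ q`, Brahmagupta's theorem puts the anticenter `(A₁ + A₂ + A₃ + A₄) / 2 - O`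
at the diagonal point `X`, and the four mirror images become `X ± p / 2 ± q / 2`. So the ellipse
with foci `O`, `X` and `2a = ‖p + q‖ / 2` is tangent to the four side lines, and the tangency
points can be computed explicitly and lie on the sides. It is a circle only when `O = X`, and
then both diagonals are diameters, so the quadrilateral is a parallelogram.
-/

open scoped InnerProductSpace

lemma real_inner_eq_re_mul_add_im_mul (z w : ℂ) : ⟪z, w⟫_ℝ = z.re * w.re + z.im * w.im := by
  simp only [Complex.inner, Complex.mul_re, Complex.conj_re, Complex.conj_im]
  ring

lemma dist_eq_dist_iff_sq {z w u v : ℂ} :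
    dist z w = dist u v ↔
      (z.re - w.re) ^ 2 + (z.im - w.im) ^ 2 = (u.re - v.re) ^ 2 + (u.im - v.im) ^ 2 := by
  rw [Complex.dist_eq_re_im, Complex.dist_eq_re_im]
  exact Real.sqrt_inj (by positivity) (by positivity)

lemma ellipseSet_comm (f₁ f₂ : ℂ) (a : ℝ) : EllipseSet f₁ f₂ a = EllipseSet f₂ f₁ a := by
  ext z
  simp [EllipseSet, add_comm]

lemma Para.exists_eq_smul {p q : ℂ} (h : Para p q) (hp : p ≠ 0) : ∃ κ : ℝ, q = κ • p := by
  have hp' : p.re ^ 2 + p.im ^ 2 ≠ 0 := by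
    rw [← Complex.normSq_pos, Complex.normSq_apply] at hp
    nlinarith
  unfold Para at h
  refine ⟨(p.re * q.re + p.im * q.im) / (p.re ^ 2 + p.im ^ 2), Complex.ext ?_ ?_⟩ <;>
    simp only [Complex.real_smul, Complex.mul_re, Complex.mul_im, Complex.ofReal_re,
      Complex.ofReal_im] <;>
    field_simp
  · linear_combination (-p.im) * h
  · linear_combination p.re * h

lemma smul_add_smul_eq_zero_of_not_para {p q : ℂ} (hpq : ¬Para p q) {a b : ℝ}
    (h : a • p + b • q = 0) : a = 0 ∧ b = 0 := by
  have hre := congrArg Complex.re h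
  have him := congrArg Complex.im h
  simp only [Complex.add_re, Complex.add_im, Complex.real_smul, Complex.mul_re, Complex.mul_im,
    Complex.ofReal_re, Complex.ofReal_im, Complex.zero_re, Complex.zero_im] at hre him
  have hd : p.re * q.im - p.im * q.re ≠ 0 := sub_ne_zero.mpr hpq
  constructor
  · refine (mul_eq_zero.mp ?_).resolve_right hd
    linear_combination q.im * hre - q.re * him
  · refine (mul_eq_zero.mp ?_).resolve_right hd
    linear_combination p.re * him - p.im * hre

lemma eq_zero_of_inner_eq_zero_of_not_para {p q w : ℂ} (hpq : ¬Para p q)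
    (hp : ⟪w, p⟫_ℝ = 0) (hq : ⟪w, q⟫_ℝ = 0) : w = 0 := by
  rw [real_inner_eq_re_mul_add_im_mul] at hp hq
  have hd : p.re * q.im - p.im * q.re ≠ 0 := sub_ne_zero.mpr hpq
  apply Complex.ext
  · refine (mul_eq_zero.mp (?_ : w.re * (p.re * q.im - p.im * q.re) = 0)).resolve_right hd
    linear_combination q.im * hp - p.im * hq
  · refine (mul_eq_zero.mp (?_ : w.im * (p.re * q.im - p.im * q.re) = 0)).resolve_right hd
    linear_combination p.re * hq - q.re * hp

lemma not_para_smul_add_smul {p q : ℂ} (hpq : ¬Para p q) {a b c d : ℝ} (h : a * d - b * c ≠ 0) :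
    ¬Para (a • p + b • q) (c • p + d • q) := by
  intro hpar
  apply hpq
  unfold Para at hpar ⊢
  simp only [Complex.add_re, Complex.add_im, Complex.real_smul, Complex.mul_re, Complex.mul_im,
    Complex.ofReal_re, Complex.ofReal_im] at hpar
  have : (a * d - b * c) * (p.re * q.im - p.im * q.re) = 0 := by linear_combination hpar
  linarith [(mul_eq_zero.mp this).resolve_left h]

lemma mem_lineThrough_iff {P Q z : ℂ} (hPQ : P ≠ Q) :
    z ∈ LineThrough P Q ↔ Para (Q - P) (z - P) := by
  constructor
  · rintro ⟨θ, rfl⟩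
    simp only [Para, add_sub_cancel_left, Complex.smul_re, Complex.smul_im, smul_eq_mul]
    ring
  · intro h
    obtain ⟨κ, hκ⟩ := h.exists_eq_smul (sub_ne_zero.mpr hPQ.symm)
    exact ⟨κ, by rw [← hκ, add_sub_cancel]⟩

/-- `P + Q - O` is the mirror image of `O` in the line `P Q`. -/
lemma dist_eq_dist_add_sub_of_mem_lineThrough {O P Q z : ℂ} (hO : dist O P = dist O Q)
    (hz : z ∈ LineThrough P Q) : dist z O = dist z (P + Q - O) := by
  obtain ⟨θ, rfl⟩ := hz
  rw [dist_eq_dist_iff_sq] at hO ⊢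
  simp only [Complex.add_re, Complex.add_im, Complex.sub_re, Complex.sub_im, Complex.smul_re,
    Complex.smul_im, smul_eq_mul]
  linear_combination (1 - 2 * θ) * hO

lemma exists_mem_segment_eq_zero {E : Type*} [AddCommGroup E] [Module ℝ E] [TopologicalSpace E]
    [ContinuousAdd E] [ContinuousSMul ℝ E] {f : E → ℝ} (hf : Continuous f) {x y : E}
    (h : f x * f y ≤ 0) : ∃ w ∈ segment ℝ x y, f w = 0 := by
  have hseg := (convex_segment x y).isPreconnected
  rcases mul_nonpos_iff.mp h with ⟨hx, hy⟩ | ⟨hx, hy⟩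
  · exact hseg.intermediate_value (right_mem_segment ℝ x y) (left_mem_segment ℝ x y)
      hf.continuousOn ⟨hy, hx⟩
  · exact hseg.intermediate_value (left_mem_segment ℝ x y) (right_mem_segment ℝ x y)
      hf.continuousOn ⟨hx, hy⟩

lemma exists_mem_lineThrough_dist_add_dist_le {O P Q : ℂ} (g : ℂ) (hPQ : P ≠ Q)
    (hO : dist O P = dist O Q) :
    ∃ w ∈ LineThrough P Q, dist w O + dist w g ≤ max (dist O g) (dist (P + Q - O) g) := by
  set σ : ℂ → ℝ := fun z ↦ (Q - P).re * (z - P).im - (Q - P).im * (z - P).re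
  have hσ : Continuous σ := by fun_prop
  have hL : ∀ z, σ z = 0 → z ∈ LineThrough P Q := fun z hz ↦
    (mem_lineThrough_iff hPQ).mpr (sub_eq_zero.mp hz)
  have crossing : ∀ x, (∀ z ∈ LineThrough P Q, dist z O = dist z x) → σ x * σ g ≤ 0 →
      ∃ w ∈ LineThrough P Q, dist w O + dist w g = dist x g := by
    intro x hx hxg
    obtain ⟨w, hw, hσw⟩ := exists_mem_segment_eq_zero hσ hxg
    refine ⟨w, hL w hσw, ?_⟩
    rw [hx w (hL w hσw), dist_comm w x]
    exact dist_add_dist_of_mem_segment hw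
  -- `O` and its mirror image lie on opposite sides of the line, so one of them is not on the
  -- side of `g`.
  by_cases hOg : σ O * σ g ≤ 0
  · obtain ⟨w, hw, hwg⟩ := crossing O (fun _ _ ↦ rfl) hOg
    exact ⟨w, hw, hwg.trans_le (le_max_left _ _)⟩
  · have hσ' : σ (P + Q - O) = -σ O := by
      simp only [σ, Complex.sub_re, Complex.sub_im, Complex.add_re, Complex.add_im]
      ring
    obtain ⟨w, hw, hwg⟩ := crossing (P + Q - O)
      (fun _ hz ↦ dist_eq_dist_add_sub_of_mem_lineThrough hO hz) (by rw [hσ']; linarith)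
    exact ⟨w, hw, hwg.trans_le (le_max_right _ _)⟩

lemma exists_mem_lineThrough_ne_dist_add_dist_eq {O g P Q w ζ : ℂ} {r : ℝ}
    (hw : w ∈ LineThrough P Q) (hζ : ζ ∈ LineThrough P Q) (hwζ : w ≠ ζ)
    (hr : dist w O + dist w g ≤ r) :
    ∃ z ∈ LineThrough P Q, z ≠ ζ ∧ dist z O + dist z g = r := by
  -- Along the ray from `w` pointing away from `ζ` the sum of distances grows without bound.
  set d := w - ζ
  set f : ℝ → ℝ := fun θ ↦ dist (w + θ • d) O + dist (w + θ • d) g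
  have hd : 0 < ‖d‖ := norm_pos_iff.mpr (sub_ne_zero.mpr hwζ)
  have hf : Continuous f := by fun_prop
  have hbound : ∀ θ ≥ 0, θ * ‖d‖ - dist w O ≤ f θ := by
    intro θ hθ
    have h₁ : dist (w + θ • d) w = θ * ‖d‖ := by
      rw [dist_eq_norm, add_sub_cancel_left, norm_smul, Real.norm_of_nonneg hθ]
    linarith [dist_triangle (w + θ • d) O w, dist_comm w O, dist_nonneg (x := w + θ • d) (y := g)]
  have htop : Filter.Tendsto f Filter.atTop Filter.atTop := by
    refine Filter.tendsto_atTop_mono' _ ?_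
      (Filter.tendsto_atTop_add_const_right _ (-dist w O)
        (Filter.tendsto_id.atTop_mul_const hd))
    filter_upwards [Filter.eventually_ge_atTop 0] with θ hθ
    simpa [sub_eq_add_neg] using hbound θ hθ
  obtain ⟨θ, hθ, hfθ⟩ := intermediate_value_Ici hf.continuousOn htop
    (show r ∈ Ici (f 0) by simpa [f] using hr)
  obtain ⟨a, rfl⟩ := hw
  obtain ⟨b, rfl⟩ := hζ
  refine ⟨_, ⟨a + θ * (a - b), by simp only [d]; module⟩, ?_, hfθ⟩
  intro h
  have : (1 + θ) • d = 0 := by rw [← sub_eq_zero.mpr h]; simp only [d]; module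
  have hθ' : (1 : ℝ) + θ ≠ 0 := by linarith [mem_Ici.mp hθ]
  exact hd.ne' (by rw [(smul_eq_zero.mp this).resolve_left hθ', norm_zero])

lemma TangentToSide.dist_add_sub_eq {O g P Q : ℂ} {a : ℝ}
    (h : TangentToSide (EllipseSet O g a) P Q) (hPQ : P ≠ Q) (hO : dist O P = dist O Q)
    (ha : dist O g < 2 * a) : dist (P + Q - O) g = 2 * a := by
  obtain ⟨ζ, -, hζ⟩ := h
  have hζmem : ζ ∈ EllipseSet O g a ∩ LineThrough P Q := hζ ▸ rfl
  apply le_antisymm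
  · calc dist (P + Q - O) g ≤ dist ζ (P + Q - O) + dist ζ g := dist_triangle_left _ _ _
      _ = 2 * a := by rw [← dist_eq_dist_add_sub_of_mem_lineThrough hO hζmem.2]; exact hζmem.1
  · by_contra! hlt
    obtain ⟨w, hwL, hw⟩ := exists_mem_lineThrough_dist_add_dist_le g hPQ hO
    have hw' : dist w O + dist w g < 2 * a := hw.trans_lt (max_lt ha hlt)
    have hwζ : w ≠ ζ := by rintro rfl; exact hw'.ne hζmem.1
    obtain ⟨z, hzL, hzζ, hz⟩ := exists_mem_lineThrough_ne_dist_add_dist_eq hwL hζmem.2 hwζ hw'.le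
    exact hzζ (hζ.subset ⟨hz, hzL⟩)

lemma ellipseSet_inter_lineThrough {O P Q : ℂ} (g : ℂ) (hO : dist O P = dist O Q) :
    EllipseSet O g (dist (P + Q - O) g / 2) ∩ LineThrough P Q
      = segment ℝ (P + Q - O) g ∩ LineThrough P Q := by
  ext z
  simp only [mem_inter_iff, and_congr_left_iff]
  intro hz
  change dist z O + dist z g = 2 * (dist (P + Q - O) g / 2) ↔ _
  rw [dist_eq_dist_add_sub_of_mem_lineThrough hO hz, mul_div_cancel₀ _ two_ne_zero,
    dist_comm z, dist_add_dist_eq_iff, mem_segment_iff_wbtw]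

lemma exists_mem_segment_inter_lineThrough_eq_singleton {X u v : ℂ} {s t c : ℝ}
    (huv : ¬Para u v) (hs : 0 < s) (ht : 0 < t) (hc : s * t ≤ c * (s + t)) :
    ∃ ζ ∈ segment ℝ (X + s • u) (X + t • v),
      segment ℝ (X + c • (u + v)) X ∩ LineThrough (X + s • u) (X + t • v) = {ζ} := by
  have hst : 0 < s + t := by linarith
  have hc' : 0 < c * (s + t) := (mul_pos hs ht).trans_le hc
  have hc0 : 0 < c := pos_of_mul_pos_left hc' hst.le
  have hζ : X + (s * t / (s + t)) • (u + v)
      = X + s • u + (s / (s + t)) • (X + t • v - (X + s • u)) := by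
    match_scalars <;> field_simp <;> ring
  refine ⟨X + (s * t / (s + t)) • (u + v), ?_, ?_⟩
  · rw [segment_eq_image', hζ]
    exact ⟨s / (s + t), ⟨by positivity, (div_le_one hst).mpr (by linarith)⟩, rfl⟩
  ext z
  simp only [mem_inter_iff, mem_singleton_iff]
  constructor
  · rintro ⟨hz, θ, rfl⟩
    rw [segment_symm, segment_eq_image'] at hz
    obtain ⟨μ, -, hμ⟩ := hz
    obtain ⟨h₁, h₂⟩ := smul_add_smul_eq_zero_of_not_para huv
      (a := μ * c - s + θ * s) (b := μ * c - θ * t) (by linear_combination (norm := module) hμ)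
    have hθ : θ = s / (s + t) := by field_simp; linarith
    rw [hζ, hθ]
  · rintro rfl
    refine ⟨?_, s / (s + t), hζ⟩
    rw [segment_symm, segment_eq_image']
    refine ⟨s * t / (c * (s + t)), ⟨by positivity, (div_le_one hc').mpr hc⟩, ?_⟩
    match_scalars <;> field_simp
    ring

lemma eq_midpoint_of_mem_segment_of_dist_eq {E : Type*} [NormedAddCommGroup E] [NormedSpace ℝ E]
    [StrictConvexSpace ℝ E] {x y z : E} (hy : y ∈ segment ℝ x z) (h : dist y x = dist y z) :
    y = midpoint ℝ x z := by
  have := dist_add_dist_of_mem_segment hy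
  rw [dist_comm] at h
  exact eq_midpoint_of_dist_eq_half (by linarith) (by linarith)

lemma norm_smul_add_smul_lt_norm_add {F : Type*} [NormedAddCommGroup F] [InnerProductSpace ℝ F]
    {p q : F} (hpq : ⟪p, q⟫_ℝ = 0) (hp : p ≠ 0) {α β : ℝ} (hα : |α| < 1) (hβ : |β| ≤ 1) :
    ‖α • p + β • q‖ < ‖p + q‖ := by
  have h₁ := norm_add_sq_eq_norm_sq_add_norm_sq_real (x := α • p) (y := β • q)
    (by rw [inner_smul_left, inner_smul_right, hpq]; simp)
  have h₂ := norm_add_sq_eq_norm_sq_add_norm_sq_real hpq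
  rw [norm_smul, norm_smul, Real.norm_eq_abs, Real.norm_eq_abs] at h₁
  have hp' : 0 < ‖p‖ := norm_pos_iff.mpr hp
  rw [← abs_norm (α • p + β • q), ← abs_norm (p + q), ← sq_lt_sq, sq, sq, h₁, h₂]
  have hα' : |α| * |α| < 1 := by nlinarith [abs_nonneg α]
  have hβ' : |β| * |β| ≤ 1 := by nlinarith [abs_nonneg β]
  nlinarith [mul_pos hp' hp', mul_self_nonneg ‖q‖]

lemma dist_eq_dist_of_concyclic_parallelogram {a b c d g : ℂ} (hpar : a + c = b + d)
    (hnp : ¬Para (a - c) (b - d)) (hab : dist a g = dist b g) (hac : dist a g = dist c g)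
    (hbd : dist b g = dist d g) : dist a c = dist b d := by
  have hcenter : a + c - 2 * g = 0 := by
    rw [dist_eq_dist_iff_sq] at hac hbd
    apply eq_zero_of_inner_eq_zero_of_not_para hnp
    · simp only [real_inner_eq_re_mul_add_im_mul, Complex.sub_re, Complex.sub_im, Complex.add_re,
        Complex.add_im, Complex.mul_re, Complex.mul_im, Complex.re_ofNat, Complex.im_ofNat]
      linear_combination hac
    · simp only [hpar, real_inner_eq_re_mul_add_im_mul, Complex.sub_re, Complex.sub_im,
        Complex.add_re, Complex.add_im, Complex.mul_re, Complex.mul_im, Complex.re_ofNat,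
        Complex.im_ofNat]
      linear_combination hbd
  have hdiag : ∀ x y, x + y - 2 * g = 0 → dist x y = 2 * dist x g := fun x y h ↦ by
    rw [dist_eq_norm, dist_eq_norm, show x - y = 2 * (x - g) by linear_combination -h, norm_mul,
      Complex.norm_two]
  rw [hdiag a c hcenter, hdiag b d (by rwa [← hpar]), hab]

lemma orthodiagonal_iff_inner {A B C D : ℂ} : Orthodiagonal A B C D ↔ ⟪C - A, D - B⟫_ℝ = 0 := by
  rw [real_inner_eq_re_mul_add_im_mul, Orthodiagonal]

lemma orthodiagonal_iff_norm_eq {A B C D : ℂ} :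
    Orthodiagonal A B C D ↔ ‖A + B - (C + D)‖ = ‖B + C - (D + A)‖ := by
  rw [orthodiagonal_iff_inner, InnerProductGeometry.inner_eq_zero_iff_angle_eq_pi_div_two,
    ← InnerProductGeometry.norm_add_eq_norm_sub_iff_angle_eq_pi_div_two,
    ← norm_neg (A + B - (C + D)), show -(A + B - (C + D)) = C - A + (D - B) by ring,
    show B + C - (D + A) = C - A - (D - B) by ring]

section Quadrilateral

variable {O X A B C D : ℂ}

lemma IsConvexQuad.rotate (h : IsConvexQuad A B C D) : IsConvexQuad B C D A := by
  obtain ⟨hA, hB, hC, hD, hdiag⟩ := h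
  refine ⟨?_, ?_, ?_, hA, by rw [segment_symm ℝ C A, Set.inter_comm]; exact hdiag⟩
  · convert hB using 3; ext; simp only [mem_insert_iff, mem_singleton_iff]; tauto
  · convert hC using 3; ext; simp only [mem_insert_iff, mem_singleton_iff]; tauto
  · convert hD using 3; ext; simp only [mem_insert_iff, mem_singleton_iff]; tauto

lemma IsCircCenter.rotate (h : IsCircCenter O A B C D) : IsCircCenter O B C D A :=
  ⟨h.2.1, h.2.2, (h.1.trans (h.2.1.trans h.2.2)).symm⟩

lemma IsDiagPoint.rotate (h : IsDiagPoint X A B C D) : IsDiagPoint X B C D A :=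
  ⟨h.2, segment_symm ℝ A C ▸ h.1⟩

lemma Orthodiagonal.rotate (h : Orthodiagonal A B C D) : Orthodiagonal B C D A := by
  unfold Orthodiagonal at h ⊢
  simp only [Complex.sub_re, Complex.sub_im] at h ⊢
  linear_combination -h

lemma IsConvexQuad.ne (h : IsConvexQuad A B C D) : A ≠ B := fun hAB ↦
  h.1 (subset_convexHull ℝ _ (by simp [hAB]))

lemma IsConvexQuad.ne_of_isDiagPoint (h : IsConvexQuad A B C D) (hX : IsDiagPoint X A B C D) :
    X ≠ A := by
  rintro rfl
  exact h.1 (segment_subset_convexHull (by simp) (by simp) hX.2)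

lemma IsDiagPoint.exists_mem_Ioo (hX : IsDiagPoint X A B C D) (h : IsConvexQuad A B C D) :
    ∃ s ∈ Ioo (0 : ℝ) 1, X = A + s • (C - A) := by
  have hXA := h.ne_of_isDiagPoint hX
  have hXC := h.rotate.rotate.ne_of_isDiagPoint hX.rotate.rotate
  have := mem_openSegment_of_ne_left_right hXA.symm hXC.symm hX.1
  rw [openSegment_eq_image'] at this
  obtain ⟨s, hs, rfl⟩ := this
  exact ⟨s, hs, rfl⟩

lemma IsConvexQuad.not_para (h : IsConvexQuad A B C D) :
    ¬Para (A - C) (B - D) := by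
  intro hpar
  obtain ⟨hA, hB, hC, -, X, hXAC, hXBD⟩ := h
  have hAC : A ≠ C := fun hAC ↦ hA (subset_convexHull ℝ _ (by simp [hAC]))
  obtain ⟨κ, hκ⟩ := hpar.exists_eq_smul (sub_ne_zero.mpr hAC)
  rw [segment_eq_image'] at hXAC hXBD
  obtain ⟨s, -, hs⟩ := hXAC
  obtain ⟨t, -, ht⟩ := hXBD
  have hcol : Collinear ℝ ({A, B, C} : Set ℂ) := by
    rw [collinear_iff_of_mem (p₀ := A) (by simp)]
    refine ⟨C - A, ?_⟩
    simp only [mem_insert_iff, mem_singleton_iff, forall_eq_or_imp, forall_eq, vadd_eq_add]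
    refine ⟨⟨0, by simp⟩, ⟨s - t * κ, ?_⟩, ⟨1, by simp⟩⟩
    have hD : D = B - κ • (A - C) := by rw [← hκ, sub_sub_cancel]
    have hX : B + t • (D - B) = A + s • (C - A) := ht.trans hs.symm
    rw [hD] at hX
    linear_combination (norm := module) hX
  rcases hcol.wbtw_or_wbtw_or_wbtw with hw | hw | hw
  · exact hB (segment_subset_convexHull (by simp) (by simp) (mem_segment_iff_wbtw.mpr hw))
  · exact hC (segment_subset_convexHull (by simp) (by simp) (mem_segment_iff_wbtw.mpr hw))
  · exact hA (segment_subset_convexHull (by simp) (by simp) (mem_segment_iff_wbtw.mpr hw))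

lemma IsDiagPoint.isParallelogram (hX : IsDiagPoint X A B C D) (hO : IsCircCenter X A B C D) :
    IsParallelogram A B C D := by
  have hAC := eq_midpoint_of_mem_segment_of_dist_eq hX.1 (hO.1.trans hO.2.1)
  have hBD := eq_midpoint_of_mem_segment_of_dist_eq hX.2 (hO.2.1.trans hO.2.2)
  have := (midpoint_eq_midpoint_iff_vsub_eq_vsub ℝ).mp (hAC.symm.trans hBD)
  rw [vsub_eq_sub, vsub_eq_sub] at this
  unfold IsParallelogram
  linear_combination this

/-- Brahmagupta's theorem: the anticenter `(A + B + C + D) / 2 - O` of an orthodiagonal cyclic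
quadrilateral is the intersection point of its diagonals. -/
lemma IsCircCenter.add_add_add_eq (hO : IsCircCenter O A B C D) (hX : IsDiagPoint X A B C D)
    (hQ : IsConvexQuad A B C D) (horth : Orthodiagonal A B C D) :
    A + B + C + D = 2 * (O + X) := by
  obtain ⟨s, -, hs⟩ := hX.exists_mem_Ioo hQ
  obtain ⟨t, -, ht⟩ := hX.rotate.exists_mem_Ioo hQ.rotate
  have hAC := dist_eq_dist_iff_sq.mp (hO.1.trans hO.2.1)
  have hBD := dist_eq_dist_iff_sq.mp (hO.2.1.trans hO.2.2)
  obtain ⟨hs_re, hs_im⟩ := Complex.ext_iff.mp hs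
  obtain ⟨ht_re, ht_im⟩ := Complex.ext_iff.mp ht
  simp only [Complex.add_re, Complex.add_im, Complex.sub_re, Complex.sub_im, Complex.smul_re,
    Complex.smul_im, smul_eq_mul] at hs_re hs_im ht_re ht_im
  unfold Orthodiagonal at horth
  simp only [Complex.sub_re, Complex.sub_im] at horth
  -- `A + C - 2 O ⊥ A - C` as `O` is equidistant from `A` and `C`, while `B + D - 2 X` is a multiple
  -- of `B - D ⊥ A - C`; symmetrically for `B - D`.
  rw [← sub_eq_zero]
  apply eq_zero_of_inner_eq_zero_of_not_para hQ.not_para <;>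
    simp only [real_inner_eq_re_mul_add_im_mul, Complex.sub_re, Complex.sub_im, Complex.add_re,
      Complex.add_im, Complex.mul_re, Complex.mul_im, Complex.re_ofNat, Complex.im_ofNat]
  · linear_combination (-2 * (A.re - C.re)) * ht_re + (-2 * (A.im - C.im)) * ht_im + hAC
      - (1 - 2 * t) * horth
  · linear_combination (-2 * (B.re - D.re)) * hs_re + (-2 * (B.im - D.im)) * hs_im + hBD
      - (1 - 2 * s) * horth

lemma IsCircCenter.two_mul_dist_lt (hO : IsCircCenter O A B C D)
    (hX : IsDiagPoint X A B C D) (hQ : IsConvexQuad A B C D) (horth : Orthodiagonal A B C D) :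
    2 * dist O X < ‖A + B - (C + D)‖ := by
  obtain ⟨s, hs, hXs⟩ := hX.exists_mem_Ioo hQ
  obtain ⟨t, ht, hXt⟩ := hX.rotate.exists_mem_Ioo hQ.rotate
  have hsum := hO.add_add_add_eq hX hQ horth
  have hAC : C - A ≠ 0 := sub_ne_zero.mpr fun h ↦ hQ.1 (subset_convexHull ℝ _ (by simp [h]))
  calc 2 * dist O X = ‖2 * (O - X)‖ := by rw [norm_mul, Complex.norm_two, dist_eq_norm]
    _ = ‖(1 - 2 * s) • (C - A) + (1 - 2 * t) • (D - B)‖ := by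
        congr 1
        simp only [Complex.real_smul] at hXs hXt ⊢
        push_cast
        linear_combination -hsum - 2 * hXs - 2 * hXt
    _ < ‖(C - A) + (D - B)‖ :=
        norm_smul_add_smul_lt_norm_add (orthodiagonal_iff_inner.mp horth) hAC
          (abs_lt.mpr ⟨by linarith [hs.2], by linarith [hs.1]⟩)
          (abs_le.mpr ⟨by linarith [ht.2], by linarith [ht.1]⟩)
    _ = ‖A + B - (C + D)‖ := by rw [← norm_neg]; congr 1; ring

lemma tangentToSide_of_orthodiagonal {a : ℝ} (hQ : IsConvexQuad A B C D)
    (hO : IsCircCenter O A B C D) (hX : IsDiagPoint X A B C D) (horth : Orthodiagonal A B C D)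
    (ha : ‖A + B - (C + D)‖ = 4 * a) : TangentToSide (EllipseSet O X a) A B := by
  obtain ⟨s, hs, hXs⟩ := hX.exists_mem_Ioo hQ
  obtain ⟨t, ht, hXt⟩ := hX.rotate.exists_mem_Ioo hQ.rotate
  have hsum := hO.add_add_add_eq hX hQ horth
  have hA : A = X + s • (A - C) := by rw [hXs]; module
  have hB : B = X + t • (B - D) := by rw [hXt]; module
  have hO' : A + B - O = X + (1 / 2 : ℝ) • ((A - C) + (B - D)) := by
    rw [Complex.real_smul]
    push_cast
    linear_combination (1 / 2 : ℂ) * hsum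
  have h2a : a = dist (A + B - O) X / 2 := by
    rw [hO', dist_eq_norm, add_sub_cancel_left, norm_smul,
      show (A - C) + (B - D) = A + B - (C + D) by ring, ha, Real.norm_of_nonneg (by norm_num)]
    ring
  obtain ⟨ζ, hζ, hinter⟩ := exists_mem_segment_inter_lineThrough_eq_singleton (X := X)
    hQ.not_para hs.1 ht.1 (c := 1 / 2)
    (by nlinarith [mul_pos hs.1 (sub_pos.mpr ht.2), mul_pos ht.1 (sub_pos.mpr hs.2)])
  rw [← hA, ← hB] at hζ hinter
  rw [← hO'] at hinter
  exact ⟨ζ, hζ, by rw [h2a, ellipseSet_inter_lineThrough X hO.1, hinter]⟩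

lemma orthodiagonal_of_inscribedInQuad {g : ℂ} {a : ℝ} (hQ : IsConvexQuad A B C D)
    (hO : IsCircCenter O A B C D) (ha : dist O g < 2 * a)
    (hE : InscribedInQuad (EllipseSet O g a) A B C D) : Orthodiagonal A B C D := by
  obtain ⟨h₁, h₂, h₃, h₄⟩ := hE
  have e₁ := h₁.dist_add_sub_eq hQ.ne hO.1 ha
  have e₂ := h₂.dist_add_sub_eq hQ.rotate.ne hO.rotate.1 ha
  have e₃ := h₃.dist_add_sub_eq hQ.rotate.rotate.ne hO.rotate.rotate.1 ha
  have e₄ := h₄.dist_add_sub_eq hQ.rotate.rotate.rotate.ne hO.rotate.rotate.rotate.1 ha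
  have hdiag : ¬Para (A + B - O - (C + D - O)) (B + C - O - (D + A - O)) := by
    convert not_para_smul_add_smul hQ.not_para (a := 1) (b := 1) (c := -1) (d := 1)
      (by norm_num) using 2 <;> module
  have := dist_eq_dist_of_concyclic_parallelogram (by ring) hdiag (e₁.trans e₂.symm)
    (e₁.trans e₃.symm) (e₂.trans e₄.symm)
  rw [orthodiagonal_iff_norm_eq]
  simpa only [dist_eq_norm, sub_sub_sub_cancel_right] using this

lemma inscribedInQuad_of_orthodiagonal (hQ : IsConvexQuad A B C D) (hO : IsCircCenter O A B C D)
    (hX : IsDiagPoint X A B C D) (horth : Orthodiagonal A B C D) :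
    InscribedInQuad (EllipseSet O X (‖A + B - (C + D)‖ / 4)) A B C D := by
  have hnorm := orthodiagonal_iff_norm_eq.mp horth
  refine ⟨tangentToSide_of_orthodiagonal hQ hO hX horth (by ring),
    tangentToSide_of_orthodiagonal hQ.rotate hO.rotate hX.rotate horth.rotate ?_,
    tangentToSide_of_orthodiagonal hQ.rotate.rotate hO.rotate.rotate hX.rotate.rotate
      horth.rotate.rotate ?_,
    tangentToSide_of_orthodiagonal hQ.rotate.rotate.rotate hO.rotate.rotate.rotate
      hX.rotate.rotate.rotate horth.rotate.rotate.rotate ?_⟩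
  · rw [← hnorm]; ring
  · rw [norm_sub_rev]; ring
  · rw [norm_sub_rev, ← hnorm]; ring

end Quadrilateral

/-- A cyclic convex quadrilateral that is not a parallelogram is a
Besant quadrilateral (has an inscribed non-circular ellipse with one focus at the
circumcenter `EP`) if and only if it is orthodiagonal. -/
theorem besant_iff_orthodiagonal
    (A₁ A₂ A₃ A₄ EP : ℂ)
    (hconv : IsConvexQuad A₁ A₂ A₃ A₄)
    (hEP : IsCircCenter EP A₁ A₂ A₃ A₄)
    (hnp : ¬ IsParallelogram A₁ A₂ A₃ A₄) :
    (∃ (E : Set ℂ) (f₁ f₂ : ℂ) (a : ℝ), IsEllipse E f₁ f₂ a ∧ f₁ ≠ f₂ ∧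
        InscribedInQuad E A₁ A₂ A₃ A₄ ∧ (f₁ = EP ∨ f₂ = EP)) ↔
      Orthodiagonal A₁ A₂ A₃ A₄ := by
  constructor
  · rintro ⟨-, f₁, f₂, a, ⟨hlt, rfl⟩, -, hE, rfl | rfl⟩
    · exact orthodiagonal_of_inscribedInQuad hconv hEP hlt hE
    · rw [ellipseSet_comm] at hE
      exact orthodiagonal_of_inscribedInQuad hconv hEP (by rwa [dist_comm]) hE
  · intro horth
    obtain ⟨X, hX⟩ := hconv.2.2.2.2
    refine ⟨_, EP, X, _, ⟨?_, rfl⟩, fun h ↦ hnp (IsDiagPoint.isParallelogram hX (h ▸ hEP)),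
      inscribedInQuad_of_orthodiagonal hconv hEP hX horth, .inl rfl⟩
    linarith [hEP.two_mul_dist_lt hX hconv horth]
end
end

section
/- Let Q be a cyclic convex quadrilateral in ℝ² that is not a parallelogram, and let E₀ be an ellipse inscribed in Q which is not a circle. If one focus of E₀ equals EP (the circumcenter of Q), then the other focus of E₀ equals IP (the intersection point of the diagonals of Q), and Q is orthodiagonal. -/
open Set

noncomputable section

section AuxProof

def lsgn (P Q z : ℂ) : ℝ :=
  (z.im - P.im) * (Q.re - P.re) - (z.re - P.re) * (Q.im - P.im)

lemma smul_re' (r : ℝ) (z : ℂ) : (r • z).re = r * z.re := by simp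
lemma smul_im' (r : ℝ) (z : ℂ) : (r • z).im = r * z.im := by simp

lemma normSq_pos_of_ne {P Q : ℂ} (h : P ≠ Q) :
    0 < (Q.re - P.re)^2 + (Q.im - P.im)^2 := by
  rcases (by positivity : (0:ℝ) ≤ (Q.re - P.re)^2 + (Q.im - P.im)^2).lt_or_eq with h'|h'
  · exact h'
  · exfalso; apply h; apply Complex.ext <;> nlinarith [sq_nonneg (Q.re - P.re), sq_nonneg (Q.im - P.im)]

lemma mem_line_iff {P Q : ℂ} (h : P ≠ Q) (z : ℂ) :
    z ∈ LineThrough P Q ↔ lsgn P Q z = 0 := by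
  constructor
  · rintro ⟨θ, rfl⟩
    simp only [lsgn, Complex.add_re, Complex.add_im, smul_re', smul_im', Complex.sub_re,
      Complex.sub_im]
    ring
  · intro hz
    refine ⟨((z.re - P.re) * (Q.re - P.re) + (z.im - P.im) * (Q.im - P.im)) /
      ((Q.re - P.re)^2 + (Q.im - P.im)^2), ?_⟩
    have hd := (normSq_pos_of_ne h).ne'
    simp only [lsgn] at hz
    apply Complex.ext
    · simp only [Complex.add_re, smul_re', Complex.sub_re, Complex.sub_im]
      field_simp
      linear_combination (-(Q.im - P.im)) * hz
    · simp only [Complex.add_im, smul_im', Complex.sub_re, Complex.sub_im]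
      field_simp
      linear_combination (Q.re - P.re) * hz

lemma crossing {P Q : ℂ} (hPQ : P ≠ Q) (x y : ℂ)
    (hσ : lsgn P Q x * lsgn P Q y < 0) :
    ∃ w ∈ LineThrough P Q, dist x w + dist w y = dist x y := by
  obtain ⟨σx, hσx⟩ : ∃ s, s = lsgn P Q x := ⟨_, rfl⟩
  obtain ⟨σy, hσy⟩ : ∃ s, s = lsgn P Q y := ⟨_, rfl⟩
  rw [← hσx, ← hσy] at hσ
  have hne : σx - σy ≠ 0 := by
    rcases mul_neg_iff.mp hσ with ⟨h1, h2⟩ | ⟨h1, h2⟩ <;> intro h <;> nlinarith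
  obtain ⟨t, ht⟩ : ∃ t : ℝ, t = σx / (σx - σy) := ⟨_, rfl⟩
  have htv : (1 - t) * σx + t * σy = 0 := by
    rw [ht]; field_simp; ring
  have ht0 : 0 ≤ t := by
    rw [ht]
    rcases mul_neg_iff.mp hσ with ⟨h1, h2⟩ | ⟨h1, h2⟩
    · apply div_nonneg h1.le; nlinarith
    · rw [← neg_div_neg_eq]; apply div_nonneg <;> nlinarith
  have ht1 : t ≤ 1 := by
    rw [ht]
    rcases mul_neg_iff.mp hσ with ⟨h1, h2⟩ | ⟨h1, h2⟩
    · rw [div_le_one (by nlinarith)]; nlinarith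
    · rw [div_le_one_of_neg (by nlinarith)]; nlinarith
  have haff : lsgn P Q (x + t • (y - x)) = (1 - t) * lsgn P Q x + t * lsgn P Q y := by
    simp only [lsgn, Complex.add_re, Complex.add_im, smul_re', smul_im', Complex.sub_re,
      Complex.sub_im]
    ring
  refine ⟨x + t • (y - x), ?_, ?_⟩
  · rw [mem_line_iff hPQ, haff, ← hσx, ← hσy]
    exact htv
  · have h1 : dist x (x + t • (y - x)) = t * dist x y := by
      rw [dist_self_add_right, norm_smul, Real.norm_eq_abs, abs_of_nonneg ht0, dist_eq_norm']
    have h2 : dist (x + t • (y - x)) y = (1 - t) * dist x y := by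
      rw [dist_eq_norm, show x + t • (y - x) - y = (1 - t) • (x - y) by module, norm_smul,
        Real.norm_eq_abs, abs_of_nonneg (by linarith : (0:ℝ) ≤ 1 - t), ← dist_eq_norm]
    rw [h1, h2]; ring

lemma line_sum_ge {P Q : ℂ} (hPQ : P ≠ Q) {f₁ f₂ ζ : ℂ} {a : ℝ}
    (htan : EllipseSet f₁ f₂ a ∩ LineThrough P Q = {ζ}) :
    ∀ z ∈ LineThrough P Q, 2 * a ≤ dist z f₁ + dist z f₂ := by
  rintro z ⟨t₀, rfl⟩
  by_contra hlt
  push_neg at hlt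
  have ha : (0:ℝ) < 2 * a := lt_of_le_of_lt (by positivity) hlt
  have hQP : (0:ℝ) < ‖Q - P‖ := by
    rw [norm_pos_iff]; exact sub_ne_zero.mpr (Ne.symm hPQ)
  set φ : ℝ → ℝ := fun t => dist (P + t • (Q - P)) f₁ + dist (P + t • (Q - P)) f₂ with hφ
  have hcont : Continuous φ := by
    apply Continuous.add <;>
      exact (continuous_const.add (continuous_id.smul continuous_const)).dist continuous_const
  have hgrow : ∀ t : ℝ, |t| * ‖Q - P‖ - dist P f₁ ≤ φ t := by
    intro t
    have h1 : dist (P + t • (Q - P)) P = |t| * ‖Q - P‖ := by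
      rw [dist_comm, dist_self_add_right, norm_smul, Real.norm_eq_abs]
    have h2 : dist (P + t • (Q - P)) P - dist P f₁ ≤ dist (P + t • (Q - P)) f₁ := by
      have h4 := dist_triangle (P + t • (Q - P)) f₁ P
      have h5 : dist f₁ P = dist P f₁ := dist_comm f₁ P
      linarith
    have h3 : (0:ℝ) ≤ dist (P + t • (Q - P)) f₂ := dist_nonneg
    show |t| * ‖Q - P‖ - dist P f₁ ≤ dist (P + t • (Q - P)) f₁ + dist (P + t • (Q - P)) f₂
    linarith
  have hdnn : (0:ℝ) ≤ dist P f₁ := dist_nonneg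
  have hdivnn : (0:ℝ) ≤ (2 * a + dist P f₁) / ‖Q - P‖ := div_nonneg (by linarith) hQP.le
  obtain ⟨M, hM⟩ : ∃ M : ℝ, M = |t₀| + 1 + (2 * a + dist P f₁) / ‖Q - P‖ := ⟨_, rfl⟩
  have hφlt : φ t₀ < 2 * a := hlt
  have hMbig : ∀ t : ℝ, |t| = M → 2 * a ≤ φ t := by
    intro t htM
    have h1 : (2 * a + dist P f₁) / ‖Q - P‖ * ‖Q - P‖ = 2 * a + dist P f₁ :=
      div_mul_cancel₀ _ hQP.ne'
    have h2 : (0:ℝ) ≤ |t₀| + 1 := by positivity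
    have h3 := hgrow t
    rw [htM, hM, add_mul, h1] at h3
    have := mul_nonneg h2 hQP.le
    linarith
  have hMpos : (0:ℝ) ≤ M := by rw [hM]; positivity
  have ht₀M1 : -M < t₀ := by have := neg_abs_le t₀; rw [hM]; linarith
  have ht₀M2 : t₀ < M := by have := le_abs_self t₀; rw [hM]; linarith
  obtain ⟨s₁, hs₁mem, hs₁⟩ : ∃ s ∈ Icc (-M) t₀, φ s = 2 * a := by
    have h := intermediate_value_Icc' ht₀M1.le hcont.continuousOn
    have hmem : (2*a) ∈ Icc (φ t₀) (φ (-M)) :=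
      ⟨hφlt.le, hMbig (-M) (by rw [abs_neg, abs_of_nonneg hMpos])⟩
    obtain ⟨s, hs, hval⟩ := h hmem
    exact ⟨s, hs, hval⟩
  obtain ⟨s₂, hs₂mem, hs₂⟩ : ∃ s ∈ Icc t₀ M, φ s = 2 * a := by
    have h := intermediate_value_Icc ht₀M2.le hcont.continuousOn
    have hmem : (2*a) ∈ Icc (φ t₀) (φ M) := ⟨hφlt.le, hMbig M (abs_of_nonneg hMpos)⟩
    obtain ⟨s, hs, hval⟩ := h hmem
    exact ⟨s, hs, hval⟩
  have hz₁ : P + s₁ • (Q - P) ∈ EllipseSet f₁ f₂ a ∩ LineThrough P Q := ⟨hs₁, ⟨s₁, rfl⟩⟩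
  have hz₂ : P + s₂ • (Q - P) ∈ EllipseSet f₁ f₂ a ∩ LineThrough P Q := ⟨hs₂, ⟨s₂, rfl⟩⟩
  rw [htan, mem_singleton_iff] at hz₁ hz₂
  have hss : s₁ = s₂ := by
    have h := hz₁.trans hz₂.symm
    have h' : (s₁ - s₂) • (Q - P) = 0 := by
      rw [sub_smul, sub_eq_zero]; exact add_left_cancel h
    rcases smul_eq_zero.mp h' with h''|h''
    · exact sub_eq_zero.mp h''
    · exact absurd h'' (sub_ne_zero.mpr (Ne.symm hPQ))
  have hlt1 : s₁ < t₀ := lt_of_le_of_ne hs₁mem.2 (fun h => by rw [h] at hs₁; linarith)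
  have hlt2 : t₀ < s₂ := lt_of_le_of_ne hs₂mem.1 (Ne.symm (fun h => by rw [h] at hs₂; linarith))

  rw [hss] at hlt1
  linarith

lemma refl_dist (O P Q z : ℂ) (hO : Complex.normSq (O - P) = Complex.normSq (O - Q))
    (θ : ℝ) (hz : z = P + θ • (Q - P)) :
    Complex.normSq (z - O) = Complex.normSq (z - (P + Q - O)) := by
  subst hz
  simp only [Complex.normSq_apply, Complex.add_re, Complex.add_im, Complex.sub_re,
    Complex.sub_im, smul_re', smul_im'] at hO ⊢
  linear_combination (1 - 2*θ) * hO

lemma lsgn_refl (P Q O : ℂ) : lsgn P Q (P + Q - O) = - lsgn P Q O := by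
  simp only [lsgn, Complex.add_re, Complex.add_im, Complex.sub_re, Complex.sub_im]; ring

lemma key_tangent {f₁ f₂ P Q : ℂ} {a : ℝ} (hPQ : P ≠ Q) (hfo : dist f₁ f₂ < 2 * a)
    (hEq : dist f₁ P = dist f₁ Q)
    (htan : ∃ ζ, ζ ∈ segment ℝ P Q ∧ EllipseSet f₁ f₂ a ∩ LineThrough P Q = {ζ}) :
    dist (P + Q - f₁) f₂ = 2 * a := by
  obtain ⟨ζ, -, htan⟩ := htan
  have hge := line_sum_ge hPQ htan
  have hζ : ζ ∈ EllipseSet f₁ f₂ a ∩ LineThrough P Q := htan ▸ mem_singleton ζ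
  have hζE : dist ζ f₁ + dist ζ f₂ = 2 * a := hζ.1
  have hζL : ζ ∈ LineThrough P Q := hζ.2
  -- normSq hypothesis for reflection
  have hEq' : Complex.normSq (f₁ - P) = Complex.normSq (f₁ - Q) := by
    have h1 := congrArg (·^2) hEq
    simpa [Complex.dist_eq, Complex.sq_norm] using h1
  have hrefl : ∀ z ∈ LineThrough P Q, dist z f₁ = dist z (P + Q - f₁) := by
    rintro z ⟨θ, rfl⟩
    rw [Complex.dist_eq, Complex.dist_eq, Complex.norm_def, Complex.norm_def]
    congr 1
    exact refl_dist f₁ P Q _ hEq' θ rfl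
  -- upper bound
  have hub : dist (P + Q - f₁) f₂ ≤ 2 * a := by
    have h1 := dist_triangle (P + Q - f₁) ζ f₂
    have h2 : dist (P + Q - f₁) ζ = dist ζ f₁ := by rw [dist_comm, ← hrefl ζ hζL]
    linarith
  -- f₁ f₂ not on line
  have hf₁ : f₁ ∉ LineThrough P Q := by
    intro h
    have := hge f₁ h
    simp only [dist_self, zero_add] at this
    linarith
  have hf₂ : f₂ ∉ LineThrough P Q := by
    intro h
    have := hge f₂ h
    rw [dist_comm f₂ f₁] at this
    simp only [dist_self, add_zero] at this
    linarith
  have hσ₁ : lsgn P Q f₁ ≠ 0 := fun h => hf₁ ((mem_line_iff hPQ f₁).mpr h)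
  have hσ₂ : lsgn P Q f₂ ≠ 0 := fun h => hf₂ ((mem_line_iff hPQ f₂).mpr h)
  -- f₁ f₂ strictly same side
  have hsame : 0 < lsgn P Q f₁ * lsgn P Q f₂ := by
    rcases lt_trichotomy (lsgn P Q f₁ * lsgn P Q f₂) 0 with h|h|h
    · exfalso
      obtain ⟨w, hwL, hwd⟩ := crossing hPQ f₁ f₂ h
      have := hge w hwL
      rw [dist_comm w f₁] at this
      linarith
    · exfalso; rcases mul_eq_zero.mp h with h'|h' <;> [exact hσ₁ h'; exact hσ₂ h']
    · exact h
  -- reflection on opposite side of f₂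
  have hopp : lsgn P Q (P + Q - f₁) * lsgn P Q f₂ < 0 := by
    rw [lsgn_refl]
    nlinarith
  obtain ⟨w, hwL, hwd⟩ := crossing hPQ (P + Q - f₁) f₂ hopp
  have hlb : 2 * a ≤ dist (P + Q - f₁) f₂ := by
    have h1 := hge w hwL
    have h2 : dist (P + Q - f₁) w = dist w f₁ := by rw [dist_comm, hrefl w hwL]
    linarith
  linarith

lemma mem_seg_of_between (B d : ℂ) {u v w : ℝ}
    (h : (v ≤ u ∧ u ≤ w) ∨ (w ≤ u ∧ u ≤ v)) :
    B + u • d ∈ segment ℝ (B + v • d) (B + w • d) := by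
  have main : ∀ v w : ℝ, v ≤ u → u ≤ w →
      B + u • d ∈ segment ℝ (B + v • d) (B + w • d) := by
    intro v w h1 h2
    rcases eq_or_lt_of_le (h1.trans h2) with h3|h3
    · have hv : u = v := le_antisymm (h3 ▸ h2) h1
      rw [hv]; exact left_mem_segment ℝ _ _
    · rw [segment_eq_image' ℝ]
      refine ⟨(u - v)/(w - v), ⟨div_nonneg (by linarith) (by linarith),
        by rw [div_le_one (by linarith)]; linarith⟩, ?_⟩
      show B + v • d + ((u - v)/(w - v)) • (B + w • d - (B + v • d)) = B + u • d
      have he : B + w • d - (B + v • d) = (w - v) • d := by module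
      rw [he, smul_smul, div_mul_cancel₀ _ (by linarith : w - v ≠ 0)]
      module
  rcases h with ⟨h1, h2⟩ | ⟨h1, h2⟩
  · exact main v w h1 h2
  · rw [segment_symm]; exact main w v h1 h2

lemma outside3 {x a b c : ℝ}
    (h1 : ¬((a ≤ x ∧ x ≤ b) ∨ (b ≤ x ∧ x ≤ a)))
    (h2 : ¬((a ≤ x ∧ x ≤ c) ∨ (c ≤ x ∧ x ≤ a)))
    (h3 : ¬((b ≤ x ∧ x ≤ c) ∨ (c ≤ x ∧ x ≤ b))) :
    (x < a ∧ x < b ∧ x < c) ∨ (a < x ∧ b < x ∧ c < x) := by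
  rcases le_or_gt x a with ha|ha <;> rcases le_or_gt x b with hb|hb <;>
    rcases le_or_gt x c with hc|hc
  · refine Or.inl ⟨?_, ?_, ?_⟩
    · by_contra h; push_neg at h; exact h1 (Or.inl ⟨h, hb⟩)
    · by_contra h; push_neg at h; exact h1 (Or.inr ⟨h, ha⟩)
    · by_contra h; push_neg at h; exact h2 (Or.inr ⟨h, ha⟩)
  · exact absurd (Or.inr ⟨hc.le, ha⟩) h2
  · exact absurd (Or.inr ⟨hb.le, ha⟩) h1
  · exact absurd (Or.inr ⟨hb.le, ha⟩) h1
  · exact absurd (Or.inl ⟨ha.le, hb⟩) h1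
  · exact absurd (Or.inl ⟨ha.le, hb⟩) h1
  · exact absurd (Or.inl ⟨ha.le, hc⟩) h2
  · exact Or.inr ⟨ha, hb, hc⟩

lemma real_pigeon {p q r w : ℝ}
    (h1 : ¬((q ≤ p ∧ p ≤ r) ∨ (r ≤ p ∧ p ≤ q)))
    (h2 : ¬((q ≤ p ∧ p ≤ w) ∨ (w ≤ p ∧ p ≤ q)))
    (h3 : ¬((r ≤ p ∧ p ≤ w) ∨ (w ≤ p ∧ p ≤ r)))
    (h4 : ¬((p ≤ q ∧ q ≤ r) ∨ (r ≤ q ∧ q ≤ p)))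
    (h5 : ¬((p ≤ q ∧ q ≤ w) ∨ (w ≤ q ∧ q ≤ p)))
    (h6 : ¬((r ≤ q ∧ q ≤ w) ∨ (w ≤ q ∧ q ≤ r)))
    (h7 : ¬((p ≤ r ∧ r ≤ q) ∨ (q ≤ r ∧ r ≤ p)))
    (h8 : ¬((p ≤ r ∧ r ≤ w) ∨ (w ≤ r ∧ r ≤ p)))
    (h9 : ¬((q ≤ r ∧ r ≤ w) ∨ (w ≤ r ∧ r ≤ q)))
    (h10 : ¬((p ≤ w ∧ w ≤ q) ∨ (q ≤ w ∧ w ≤ p)))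
    (h11 : ¬((p ≤ w ∧ w ≤ r) ∨ (r ≤ w ∧ w ≤ p)))
    (h12 : ¬((q ≤ w ∧ w ≤ r) ∨ (r ≤ w ∧ w ≤ q))) : False := by
  have d1 := outside3 h1 h2 h3
  have d2 := outside3 h4 h5 h6
  have d3 := outside3 h7 h8 h9
  have d4 := outside3 h10 h11 h12
  rcases d1 with ⟨a1,a2,a3⟩|⟨a1,a2,a3⟩ <;> rcases d2 with ⟨b1,b2,b3⟩|⟨b1,b2,b3⟩ <;>
    rcases d3 with ⟨c1,c2,c3⟩|⟨c1,c2,c3⟩ <;> rcases d4 with ⟨e1,e2,e3⟩|⟨e1,e2,e3⟩ <;>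
    linarith

lemma diag_not_para {A₁ A₂ A₃ A₄ X : ℂ}
    (h1 : A₁ ∉ convexHull ℝ ({A₂, A₃, A₄} : Set ℂ))
    (h2 : A₂ ∉ convexHull ℝ ({A₁, A₃, A₄} : Set ℂ))
    (h3 : A₃ ∉ convexHull ℝ ({A₁, A₂, A₄} : Set ℂ))
    (h4 : A₄ ∉ convexHull ℝ ({A₁, A₂, A₃} : Set ℂ))
    (hX1 : X ∈ segment ℝ A₁ A₃) (hX2 : X ∈ segment ℝ A₂ A₄)
    (hpar : (A₃ - A₁).re * (A₄ - A₂).im - (A₃ - A₁).im * (A₄ - A₂).re = 0) : False := by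
  have h13 : A₁ ≠ A₃ := fun h => h1 (h ▸ subset_convexHull ℝ _ (by simp))
  have hD : 0 < (A₃.re - A₁.re)^2 + (A₃.im - A₁.im)^2 := normSq_pos_of_ne h13
  obtain ⟨lam, hlam⟩ : ∃ l : ℝ, l = ((A₄.re - A₂.re) * (A₃.re - A₁.re) +
      (A₄.im - A₂.im) * (A₃.im - A₁.im)) / ((A₃.re - A₁.re)^2 + (A₃.im - A₁.im)^2) := ⟨_, rfl⟩
  have hδ₂ : A₄ - A₂ = lam • (A₃ - A₁) := by
    simp only [Complex.sub_re, Complex.sub_im] at hpar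
    apply Complex.ext
    · simp only [Complex.sub_re, smul_re', hlam]
      rw [div_mul_eq_mul_div, eq_div_iff hD.ne']
      linear_combination (-(A₃.im - A₁.im)) * hpar
    · simp only [Complex.sub_im, smul_im', hlam]
      rw [div_mul_eq_mul_div, eq_div_iff hD.ne']
      linear_combination (A₃.re - A₁.re) * hpar
  rw [segment_eq_image' ℝ] at hX1 hX2
  obtain ⟨s, -, hs⟩ := hX1
  obtain ⟨t, -, ht⟩ := hX2
  have hs' : A₁ + s • (A₃ - A₁) = X := hs
  have ht' : A₂ + t • (A₄ - A₂) = X := ht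
  have e₁ : A₁ = A₁ + (0:ℝ) • (A₃ - A₁) := by simp
  have e₃ : A₃ = A₁ + (1:ℝ) • (A₃ - A₁) := by simp
  have e₂ : A₂ = A₁ + (s - t * lam) • (A₃ - A₁) := by
    have h6 : A₂ + (t * lam) • (A₃ - A₁) = A₁ + s • (A₃ - A₁) := by
      rw [← smul_smul, ← hδ₂]
      exact ht'.trans hs'.symm
    rw [show A₁ + (s - t * lam) • (A₃ - A₁) = A₁ + s • (A₃ - A₁) - (t * lam) • (A₃ - A₁) from
      by module]
    exact eq_sub_of_add_eq h6
  have e₄ : A₄ = A₁ + (s - t * lam + lam) • (A₃ - A₁) := by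
    have h7 : A₄ = A₂ + lam • (A₃ - A₁) := by
      rw [← hδ₂]; ring
    rw [h7, e₂]; module
  have hseg : ∀ (ux uy uz : ℝ) (x y z : ℂ), x = A₁ + ux • (A₃ - A₁) →
      y = A₁ + uy • (A₃ - A₁) → z = A₁ + uz • (A₃ - A₁) →
      ((uy ≤ ux ∧ ux ≤ uz) ∨ (uz ≤ ux ∧ ux ≤ uy)) → x ∈ segment ℝ y z := by
    intro ux uy uz x y z hx hy hz hb
    rw [hx, hy, hz]
    exact mem_seg_of_between A₁ (A₃ - A₁) hb
  refine real_pigeon (p := 0) (q := s - t * lam) (r := 1) (w := s - t * lam + lam)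
    (fun hb => h1 (segment_subset_convexHull (by simp) (by simp) (hseg _ _ _ A₁ A₂ A₃ e₁ e₂ e₃ hb)))
    (fun hb => h1 (segment_subset_convexHull (by simp) (by simp) (hseg _ _ _ A₁ A₂ A₄ e₁ e₂ e₄ hb)))
    (fun hb => h1 (segment_subset_convexHull (by simp) (by simp) (hseg _ _ _ A₁ A₃ A₄ e₁ e₃ e₄ hb)))
    (fun hb => h2 (segment_subset_convexHull (by simp) (by simp) (hseg _ _ _ A₂ A₁ A₃ e₂ e₁ e₃ hb)))
    (fun hb => h2 (segment_subset_convexHull (by simp) (by simp) (hseg _ _ _ A₂ A₁ A₄ e₂ e₁ e₄ hb)))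
    (fun hb => h2 (segment_subset_convexHull (by simp) (by simp) (hseg _ _ _ A₂ A₃ A₄ e₂ e₃ e₄ hb)))
    (fun hb => h3 (segment_subset_convexHull (by simp) (by simp) (hseg _ _ _ A₃ A₁ A₂ e₃ e₁ e₂ hb)))
    (fun hb => h3 (segment_subset_convexHull (by simp) (by simp) (hseg _ _ _ A₃ A₁ A₄ e₃ e₁ e₄ hb)))
    (fun hb => h3 (segment_subset_convexHull (by simp) (by simp) (hseg _ _ _ A₃ A₂ A₄ e₃ e₂ e₄ hb)))
    (fun hb => h4 (segment_subset_convexHull (by simp) (by simp) (hseg _ _ _ A₄ A₁ A₂ e₄ e₁ e₂ hb)))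
    (fun hb => h4 (segment_subset_convexHull (by simp) (by simp) (hseg _ _ _ A₄ A₁ A₃ e₄ e₁ e₃ hb)))
    (fun hb => h4 (segment_subset_convexHull (by simp) (by simp) (hseg _ _ _ A₄ A₂ A₃ e₄ e₂ e₃ hb)))

theorem aux_main
    (A₁ A₂ A₃ A₄ EP IP : ℂ) (E : Set ℂ) (f₁ f₂ : ℂ) (a : ℝ)
    (hconv : (A₁ ∉ convexHull ℝ ({A₂, A₃, A₄} : Set ℂ) ∧
      A₂ ∉ convexHull ℝ ({A₁, A₃, A₄} : Set ℂ) ∧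
      A₃ ∉ convexHull ℝ ({A₁, A₂, A₄} : Set ℂ) ∧
      A₄ ∉ convexHull ℝ ({A₁, A₂, A₃} : Set ℂ) ∧
      (segment ℝ A₁ A₃ ∩ segment ℝ A₂ A₄).Nonempty))
    (hEP : dist EP A₁ = dist EP A₂ ∧ dist EP A₂ = dist EP A₃ ∧ dist EP A₃ = dist EP A₄)
    (hIP : IP ∈ segment ℝ A₁ A₃ ∧ IP ∈ segment ℝ A₂ A₄)
    (hE : dist f₁ f₂ < 2 * a ∧ E = EllipseSet f₁ f₂ a)
    (hins : (∃ ζ, ζ ∈ segment ℝ A₁ A₂ ∧ E ∩ LineThrough A₁ A₂ = {ζ}) ∧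
      (∃ ζ, ζ ∈ segment ℝ A₂ A₃ ∧ E ∩ LineThrough A₂ A₃ = {ζ}) ∧
      (∃ ζ, ζ ∈ segment ℝ A₃ A₄ ∧ E ∩ LineThrough A₃ A₄ = {ζ}) ∧
      (∃ ζ, ζ ∈ segment ℝ A₄ A₁ ∧ E ∩ LineThrough A₄ A₁ = {ζ}))
    (hfoc : f₁ = EP) :
    f₂ = IP ∧ ((A₃ - A₁).re * (A₄ - A₂).re + (A₃ - A₁).im * (A₄ - A₂).im = 0) := by
  subst hfoc
  obtain ⟨hcv1, hcv2, hcv3, hcv4, -⟩ := hconv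
  obtain ⟨hd1, hd2, hd3⟩ := hEP
  obtain ⟨hfo, hEe⟩ := hE
  rw [hEe] at hins
  obtain ⟨ht1, ht2, ht3, ht4⟩ := hins
  have hne12 : A₁ ≠ A₂ := fun h => hcv1 (h ▸ subset_convexHull ℝ _ (by simp))
  have hne23 : A₂ ≠ A₃ := fun h => hcv2 (h ▸ subset_convexHull ℝ _ (by simp))
  have hne34 : A₃ ≠ A₄ := fun h => hcv3 (h ▸ subset_convexHull ℝ _ (by simp))
  have hne41 : A₄ ≠ A₁ := fun h => hcv4 (h ▸ subset_convexHull ℝ _ (by simp))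
  have hne13 : A₁ ≠ A₃ := fun h => hcv1 (h ▸ subset_convexHull ℝ _ (by simp))
  have hne24 : A₂ ≠ A₄ := fun h => hcv2 (h ▸ subset_convexHull ℝ _ (by simp))
  have k₁ := key_tangent hne12 hfo hd1 ht1
  have k₂ := key_tangent hne23 hfo hd2 ht2
  have k₃ := key_tangent hne34 hfo hd3 ht3
  have k₄ := key_tangent hne41 hfo ((hd1.trans (hd2.trans hd3)).symm) ht4
  -- convert to normSq equations
  have toSq : ∀ w : ℂ, dist w f₂ = 2 * a → Complex.normSq (w - f₂) = (2*a)^2 := by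
    intro w h
    have := congrArg (·^2) h
    simpa [Complex.dist_eq, Complex.sq_norm] using this
  have N₁ := toSq _ k₁
  have N₂ := toSq _ k₂
  have N₃ := toSq _ k₃
  have N₄ := toSq _ k₄
  have toSq' : ∀ x y z : ℂ, dist x y = dist x z → Complex.normSq (x - y) = Complex.normSq (x - z) := by
    intro x y z h
    have := congrArg (·^2) h
    simpa [Complex.dist_eq, Complex.sq_norm] using this
  have C13 : Complex.normSq (f₁ - A₁) = Complex.normSq (f₁ - A₃) := toSq' _ _ _ (hd1.trans hd2)
  have C24 : Complex.normSq (f₁ - A₂) = Complex.normSq (f₁ - A₄) := toSq' _ _ _ (hd2.trans hd3)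
  simp only [Complex.normSq_apply, Complex.add_re, Complex.add_im, Complex.sub_re,
    Complex.sub_im] at N₁ N₂ N₃ N₄ C13 C24
  -- orthodiagonality
  have hod : (A₃ - A₁).re * (A₄ - A₂).re + (A₃ - A₁).im * (A₄ - A₂).im = 0 := by
    simp only [Complex.sub_re, Complex.sub_im]
    linear_combination (N₁ - N₂ + N₃ - N₄) / 2
  have hod' : (A₃.re - A₁.re) * (A₄.re - A₂.re) + (A₃.im - A₁.im) * (A₄.im - A₂.im) = 0 := by
    have := hod; simp only [Complex.sub_re, Complex.sub_im] at this; linarith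
  refine ⟨?_, hod⟩
  -- diagonals not parallel
  have hcross : (A₃ - A₁).re * (A₄ - A₂).im - (A₃ - A₁).im * (A₄ - A₂).re ≠ 0 :=
    fun h => diag_not_para hcv1 hcv2 hcv3 hcv4 hIP.1 hIP.2 h
  have hcross' : (A₃.re - A₁.re) * (A₄.im - A₂.im) - (A₃.im - A₁.im) * (A₄.re - A₂.re) ≠ 0 := by
    simpa only [Complex.sub_re, Complex.sub_im] using hcross
  -- v = A₁+A₂+A₃+A₄-2f₁-2f₂ is orthogonal to both diagonals
  have hv1 : (A₁.re + A₂.re + A₃.re + A₄.re - 2*f₁.re - 2*f₂.re) * (A₃.re - A₁.re) +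
      (A₁.im + A₂.im + A₃.im + A₄.im - 2*f₁.im - 2*f₂.im) * (A₃.im - A₁.im) = 0 := by
    linear_combination (N₂ - N₁ + N₃ - N₄) / 2
  have hv2 : (A₁.re + A₂.re + A₃.re + A₄.re - 2*f₁.re - 2*f₂.re) * (A₄.re - A₂.re) +
      (A₁.im + A₂.im + A₃.im + A₄.im - 2*f₁.im - 2*f₂.im) * (A₄.im - A₂.im) = 0 := by
    linear_combination (N₃ - N₂ + N₄ - N₁) / 2
  have hvre : A₁.re + A₂.re + A₃.re + A₄.re - 2*f₁.re - 2*f₂.re = 0 := by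
    have h := mul_eq_zero.mp (show (A₁.re + A₂.re + A₃.re + A₄.re - 2*f₁.re - 2*f₂.re) *
        ((A₃.re - A₁.re) * (A₄.im - A₂.im) - (A₃.im - A₁.im) * (A₄.re - A₂.re)) = 0 from by
      linear_combination (A₄.im - A₂.im) * hv1 - (A₃.im - A₁.im) * hv2)
    tauto
  have hvim : A₁.im + A₂.im + A₃.im + A₄.im - 2*f₁.im - 2*f₂.im = 0 := by
    have h := mul_eq_zero.mp (show (A₁.im + A₂.im + A₃.im + A₄.im - 2*f₁.im - 2*f₂.im) *
        ((A₃.re - A₁.re) * (A₄.im - A₂.im) - (A₃.im - A₁.im) * (A₄.re - A₂.re)) = 0 from by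
      linear_combination (A₃.re - A₁.re) * hv2 - (A₄.re - A₂.re) * hv1)
    tauto
  -- f₂ lies on both diagonal lines
  have nsq1 : (0:ℝ) < (A₃.re - A₁.re)^2 + (A₃.im - A₁.im)^2 := normSq_pos_of_ne hne13
  have nsq2 : (0:ℝ) < (A₄.re - A₂.re)^2 + (A₄.im - A₂.im)^2 := normSq_pos_of_ne hne24
  have hc1 : (f₂.re - A₁.re) * (A₃.im - A₁.im) - (f₂.im - A₁.im) * (A₃.re - A₁.re) = 0 := by
    have h := mul_eq_zero.mp (show ((f₂.re - A₁.re) * (A₃.im - A₁.im) -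
        (f₂.im - A₁.im) * (A₃.re - A₁.re)) * ((A₄.re - A₂.re)^2 + (A₄.im - A₂.im)^2) = 0 from by
      linear_combination (-((A₄.re - A₂.re) * (A₃.im - A₁.im) - (A₄.im - A₂.im) * (A₃.re - A₁.re)) / 2) * C24 +
        (((A₂.re + A₄.re)/2 - f₁.re) * (A₄.im - A₂.im) - ((A₂.im + A₄.im)/2 - f₁.im) * (A₄.re - A₂.re)) * hod' -
        ((A₃.im - A₁.im) * ((A₄.re - A₂.re)^2 + (A₄.im - A₂.im)^2) / 2) * hvre +
        ((A₃.re - A₁.re) * ((A₄.re - A₂.re)^2 + (A₄.im - A₂.im)^2) / 2) * hvim)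
    rcases h with h|h
    · exact h
    · exact absurd h nsq2.ne'
  have hc2 : (f₂.re - A₂.re) * (A₄.im - A₂.im) - (f₂.im - A₂.im) * (A₄.re - A₂.re) = 0 := by
    have h := mul_eq_zero.mp (show ((f₂.re - A₂.re) * (A₄.im - A₂.im) -
        (f₂.im - A₂.im) * (A₄.re - A₂.re)) * ((A₃.re - A₁.re)^2 + (A₃.im - A₁.im)^2) = 0 from by
      linear_combination (-((A₃.re - A₁.re) * (A₄.im - A₂.im) - (A₃.im - A₁.im) * (A₄.re - A₂.re)) / 2) * C13 +
        (((A₁.re + A₃.re)/2 - f₁.re) * (A₃.im - A₁.im) - ((A₁.im + A₃.im)/2 - f₁.im) * (A₃.re - A₁.re)) * hod' -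
        ((A₄.im - A₂.im) * ((A₃.re - A₁.re)^2 + (A₃.im - A₁.im)^2) / 2) * hvre +
        ((A₄.re - A₂.re) * ((A₃.re - A₁.re)^2 + (A₃.im - A₁.im)^2) / 2) * hvim)
    rcases h with h|h
    · exact h
    · exact absurd h nsq1.ne'
  -- IP lies on both lines
  obtain ⟨hIP1, hIP2⟩ := hIP
  rw [segment_eq_image' ℝ] at hIP1 hIP2
  obtain ⟨u1, -, hu1⟩ := hIP1
  obtain ⟨u2, -, hu2⟩ := hIP2
  have hu1' : A₁ + u1 • (A₃ - A₁) = IP := hu1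
  have hu2' : A₂ + u2 • (A₄ - A₂) = IP := hu2
  have hi1 : (IP.re - A₁.re) * (A₃.im - A₁.im) - (IP.im - A₁.im) * (A₃.re - A₁.re) = 0 := by
    rw [← hu1']
    simp only [Complex.add_re, Complex.add_im, smul_re', smul_im', Complex.sub_re, Complex.sub_im]
    ring
  have hi2 : (IP.re - A₂.re) * (A₄.im - A₂.im) - (IP.im - A₂.im) * (A₄.re - A₂.re) = 0 := by
    rw [← hu2']
    simp only [Complex.add_re, Complex.add_im, smul_re', smul_im', Complex.sub_re, Complex.sub_im]
    ring
  -- combine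
  have hcc1 : (IP.re - f₂.re) * (A₃.im - A₁.im) - (IP.im - f₂.im) * (A₃.re - A₁.re) = 0 := by
    linear_combination hi1 - hc1
  have hcc2 : (IP.re - f₂.re) * (A₄.im - A₂.im) - (IP.im - f₂.im) * (A₄.re - A₂.re) = 0 := by
    linear_combination hi2 - hc2
  have hre : IP.re - f₂.re = 0 := by
    have h := mul_eq_zero.mp (show (IP.re - f₂.re) *
        ((A₃.re - A₁.re) * (A₄.im - A₂.im) - (A₃.im - A₁.im) * (A₄.re - A₂.re)) = 0 from by
      linear_combination (A₃.re - A₁.re) * hcc2 - (A₄.re - A₂.re) * hcc1)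
    tauto
  have him : IP.im - f₂.im = 0 := by
    have h := mul_eq_zero.mp (show (IP.im - f₂.im) *
        ((A₃.re - A₁.re) * (A₄.im - A₂.im) - (A₃.im - A₁.im) * (A₄.re - A₂.re)) = 0 from by
      linear_combination (A₃.im - A₁.im) * hcc2 - (A₄.im - A₂.im) * hcc1)
    tauto
  apply Complex.ext <;> [linarith; linarith]

end AuxProof

/-- If a non-circular ellipse inscribed in a cyclic convex quadrilateral
(not a parallelogram) has one focus at the circumcenter `EP`, then its other focus is the
diagonal intersection point `IP`, and the quadrilateral is orthodiagonal. -/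
theorem focus_EP_implies_focus_IP
    (A₁ A₂ A₃ A₄ EP IP : ℂ) (E : Set ℂ) (f₁ f₂ : ℂ) (a : ℝ)
    (hconv : IsConvexQuad A₁ A₂ A₃ A₄)
    (hEP : IsCircCenter EP A₁ A₂ A₃ A₄)
    (hIP : IsDiagPoint IP A₁ A₂ A₃ A₄)
    (hnp : ¬ IsParallelogram A₁ A₂ A₃ A₄)
    (hE : IsEllipse E f₁ f₂ a) (hnc : f₁ ≠ f₂)
    (hins : InscribedInQuad E A₁ A₂ A₃ A₄)
    (hfoc : f₁ = EP) :
    f₂ = IP ∧ Orthodiagonal A₁ A₂ A₃ A₄ := by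
  exact aux_main A₁ A₂ A₃ A₄ EP IP E f₁ f₂ a hconv hEP hIP hE hins hfoc
end
end

section
/- Let Q be a cyclic convex quadrilateral in ℝ² that is not a parallelogram, and suppose Q is also orthodiagonal. Then there exists an ellipse E₀ inscribed in Q whose foci are EP (the circumcenter of Q) and IP (the intersection point of the diagonals of Q). -/
open Set

noncomputable section

/-!
Put `IP` at the origin of the orthogonal frame spanned by the diagonals, so that the vertices are
`a`, `b i`, `c`, `e i` in units of `A₃ - A₁`, with `a c < 0` and `b e < 0`. Concyclicity forces
`a c = b e` and puts `EP` at `((a + c) + (b + e) i) / 2`.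

For a side `XY`, the centre `EP` lies on the perpendicular bisector of `XY`, so its mirror image
in the line `XY` is `X + Y - EP`. By the reflection property, the ellipse with foci `EP`, `IP`
and major axis `|X + Y - EP - IP|` meets the line `XY` exactly where the segment from
`X + Y - EP` to `IP` crosses it, and `a c = b e < 0` puts that crossing on the side itself.
The major axis is `√(|A₁A₃|² + |A₂A₄|²) / 2` for all four sides, and it exceeds `|EP - IP|`
because `a c + b e < 0`.
-/

open Complex

lemma lineThrough_symm (P Q : ℂ) : LineThrough P Q = LineThrough Q P := by
  ext z
  constructor <;> rintro ⟨θ, rfl⟩ <;> exact ⟨1 - θ, by simp only [real_smul]; push_cast; ring⟩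

lemma TangentToSide.symm {E : Set ℂ} {P Q : ℂ} (h : TangentToSide E P Q) :
    TangentToSide E Q P := by
  obtain ⟨ζ, hseg, hline⟩ := h
  exact ⟨ζ, segment_symm ℝ P Q ▸ hseg, lineThrough_symm P Q ▸ hline⟩

lemma dist_add_sub_eq_of_mem_lineThrough {X Y O z : ℂ} (hO : dist X O = dist Y O)
    (hz : z ∈ LineThrough X Y) : dist z O = dist z (X + Y - O) := by
  obtain ⟨θ, rfl⟩ := hz
  rw [dist_eq_re_im, dist_eq_re_im, Real.sqrt_inj (by positivity) (by positivity)] at hO ⊢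
  simp only [add_re, add_im, sub_re, sub_im, real_smul, mul_re, mul_im, ofReal_re, ofReal_im,
    zero_mul, sub_zero, add_zero] at hO ⊢
  linear_combination (1 - 2 * θ) * hO

lemma ellipseSet_inter_eq_singleton {O O' P ζ : ℂ} {ℓ : Set ℂ}
    (hmirror : ∀ z ∈ ℓ, dist z O = dist z O') (hζ : ζ ∈ ℓ) (hζ' : Wbtw ℝ O' ζ P)
    (huniq : ∀ z ∈ ℓ, Wbtw ℝ O' z P → z = ζ) :
    EllipseSet O P (dist O' P / 2) ∩ ℓ = {ζ} := by
  have hmem : ∀ z ∈ ℓ, z ∈ EllipseSet O P (dist O' P / 2) ↔ Wbtw ℝ O' z P := by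
    intro z hz
    rw [EllipseSet, mem_ofPred_eq, hmirror z hz, dist_comm z O', mul_div_cancel₀ _ two_ne_zero]
    exact dist_add_dist_eq_iff
  ext z
  constructor
  · rintro ⟨hE, hℓ⟩
    exact huniq z hℓ ((hmem z hℓ).1 hE)
  · rintro rfl
    exact ⟨(hmem z hζ).2 hζ', hζ⟩

section LineMeetsSegment

variable {V : Type*} [AddCommGroup V] [Module ℝ V] {P X Y : V} {p q : ℝ}

lemma wbtw_lineMap_div (hpq : 1 ≤ p + q) :
    Wbtw ℝ (P + p • (X - P) + q • (Y - P)) (AffineMap.lineMap X Y (q / (p + q))) P := by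
  have hpq0 : p + q ≠ 0 := by linarith
  refine ⟨1 - 1 / (p + q), ⟨?_, ?_⟩, ?_⟩
  · rw [sub_nonneg]; exact div_le_one_of_le₀ hpq (by linarith)
  · rw [sub_le_self_iff]; exact div_nonneg zero_le_one (by linarith)
  · simp only [AffineMap.lineMap_apply_module]
    match_scalars <;> field_simp <;> ring

lemma eq_div_of_wbtw_lineMap (hind : LinearIndependent ℝ ![X - P, Y - P]) (hpq : 1 ≤ p + q)
    {θ : ℝ} (hw : Wbtw ℝ (P + p • (X - P) + q • (Y - P)) (AffineMap.lineMap X Y θ) P) :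
    θ = q / (p + q) := by
  obtain ⟨s, -, hs⟩ := hw
  simp only [AffineMap.lineMap_apply_module] at hs
  have hcoef := LinearIndependent.pair_iff.1 hind (1 - θ - (1 - s) * p) (θ - (1 - s) * q) (by
    linear_combination (norm := module) -hs)
  rw [eq_div_iff (by linarith)]
  linear_combination (p + q) * hcoef.2 - q * (hcoef.1 + hcoef.2)

end LineMeetsSegment

lemma lineThrough_eq_range_lineMap (X Y : ℂ) :
    LineThrough X Y = Set.range (AffineMap.lineMap (k := ℝ) X Y) := by
  ext z
  simp only [LineThrough, mem_ofPred_eq, mem_range, AffineMap.lineMap_apply_module', add_comm,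
    eq_comm]

/-- The conditions on `p` and `q` say that the segment from the mirror image `X + Y - O` of the
focus `O` to the other focus `P` crosses the side `XY`. -/
lemma tangentToSide_of_reflection {O P X Y : ℂ} {p q : ℝ} (hO : dist X O = dist Y O)
    (hind : LinearIndependent ℝ ![X - P, Y - P]) (hp : 0 ≤ p) (hq : 0 ≤ q) (hpq : 1 ≤ p + q)
    (hrefl : X + Y - O = P + p • (X - P) + q • (Y - P)) :
    TangentToSide (EllipseSet O P (dist (X + Y - O) P / 2)) X Y := by
  refine ⟨AffineMap.lineMap X Y (q / (p + q)), lineMap_mem_segment (𝕜 := ℝ) X Y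
    ⟨div_nonneg hq (by linarith), div_le_one_of_le₀ (by linarith) (by linarith)⟩, ?_⟩
  rw [hrefl, lineThrough_eq_range_lineMap]
  refine ellipseSet_inter_eq_singleton (fun z hz => ?_) ⟨_, rfl⟩ (wbtw_lineMap_div hpq) ?_
  · rw [← hrefl]
    exact dist_add_sub_eq_of_mem_lineThrough hO (lineThrough_eq_range_lineMap X Y ▸ hz)
  · rintro _ ⟨θ, rfl⟩ hw
    rw [eq_div_of_wbtw_lineMap hind hpq hw]

lemma dist_add_mul_add_mul (P u z w : ℂ) : dist (P + z * u) (P + w * u) = dist z w * ‖u‖ := by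
  rw [dist_eq, dist_eq, add_sub_add_left_eq_sub, ← sub_mul, norm_mul]

lemma dist_add_mul_self (P u z : ℂ) : dist (P + z * u) P = ‖z‖ * ‖u‖ := by
  rw [dist_eq, add_sub_cancel_left, norm_mul]

lemma linearIndependent_mul_I_mul {x y : ℝ} {u : ℂ} (hx : x ≠ 0) (hy : y ≠ 0) (hu : u ≠ 0) :
    LinearIndependent ℝ ![(x : ℂ) * u, y * I * u] := by
  refine LinearIndependent.pair_iff.2 fun s t hst => ?_
  have hst' : (s * x + t * y * I : ℂ) * u = 0 := by
    rw [← hst]; simp only [real_smul]; ring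
  have h := (mul_eq_zero.1 hst').resolve_right hu
  have hre := congrArg re h
  have him := congrArg im h
  simp only [add_re, add_im, mul_re, mul_im, ofReal_re, ofReal_im, I_re, I_im, zero_re, zero_im,
    mul_zero, zero_mul, mul_one, sub_zero, sub_self, add_zero, zero_add, mul_eq_zero] at hre him
  exact ⟨hre.resolve_right hx, him.resolve_right hy⟩

section Frame

variable {P u O : ℂ} {r : ℝ}

lemma tangentToSide_of_frame (x x' y y' : ℝ) (hu : u ≠ 0) (hx : x * x' < 0)
    (hxy : x * x' = y * y')
    (hO : O = P + (x + x' + (y + y') * I) / 2 * u)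
    (hr : 4 * r = √((x - x') ^ 2 + (y - y') ^ 2) * ‖u‖) :
    TangentToSide (EllipseSet O P r) (P + x * u) (P + y * I * u) := by
  have hy : y * y' < 0 := hxy ▸ hx
  have hx0 : x ≠ 0 := by rintro rfl; simp at hx
  have hy0 : y ≠ 0 := by rintro rfl; simp at hy
  have hp : 1 / 2 ≤ (x ^ 2 - x * x') / (2 * x ^ 2) := by
    rw [div_le_div_iff₀ two_pos (by positivity)]; nlinarith
  have hq : 1 / 2 ≤ (y ^ 2 - y * y') / (2 * y ^ 2) := by
    rw [div_le_div_iff₀ two_pos (by positivity)]; nlinarith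
  have hdist : dist (P + x * u) O = dist (P + y * I * u) O := by
    rw [hO, dist_add_mul_add_mul, dist_add_mul_add_mul, dist_eq_re_im, dist_eq_re_im]
    congr 2
    simp only [ofReal_re, ofReal_im, div_ofNat_re, div_ofNat_im, add_re, add_im, mul_re, mul_im,
      I_re, I_im, mul_zero, mul_one, add_zero, zero_add, sub_self, zero_sub, even_two,
      Even.neg_pow]
    linear_combination -hxy
  have hind : LinearIndependent ℝ ![P + x * u - P, P + y * I * u - P] := by
    simpa only [add_sub_cancel_left] using linearIndependent_mul_I_mul hx0 hy0 hu
  have hrefl : P + x * u + (P + y * I * u) - O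
      = P + ((x ^ 2 - x * x') / (2 * x ^ 2)) • (P + x * u - P)
        + ((y ^ 2 - y * y') / (2 * y ^ 2)) • (P + y * I * u - P) := by
    have hx0' : (x : ℂ) ≠ 0 := ofReal_ne_zero.2 hx0
    have hy0' : (y : ℂ) ≠ 0 := ofReal_ne_zero.2 hy0
    rw [hO]; simp only [real_smul]; push_cast; field_simp; ring
  convert tangentToSide_of_reflection hdist hind (by linarith) (by linarith) (by linarith) hrefl
    using 2
  have hmirror : P + x * u + (P + y * I * u) - O
      = P + ((x - x' : ℝ) + (y - y' : ℝ) * I) / 2 * u := by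
    rw [hO]; push_cast; ring
  rw [hmirror, dist_add_mul_self, norm_div, norm_add_mul_I, RCLike.norm_ofNat]
  linarith

lemma dist_center_lt_of_frame {x x' y y' : ℝ} (hu : u ≠ 0) (hx : x * x' < 0)
    (hxy : x * x' = y * y')
    (hr : 4 * r = √((x - x') ^ 2 + (y - y') ^ 2) * ‖u‖) :
    dist (P + (x + x' + (y + y') * I) / 2 * u) P < 2 * r := by
  have hsqrt : √((x + x') ^ 2 + (y + y') ^ 2) < √((x - x') ^ 2 + (y - y') ^ 2) :=
    Real.sqrt_lt_sqrt (by positivity) (by nlinarith)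
  have hcast : (x + x' + (y + y') * I : ℂ) = (x + x' : ℝ) + (y + y' : ℝ) * I := by push_cast; ring
  rw [dist_add_mul_self, norm_div, hcast, norm_add_mul_I, RCLike.norm_ofNat]
  nlinarith [norm_pos_iff.2 hu]

lemma IsCircCenter.eq_of_frame (hu : u ≠ 0) {a b c e : ℝ} (hac : a * c < 0) (hbe : b * e < 0)
    (hO : IsCircCenter O (P + a * u) (P + b * I * u) (P + c * u) (P + e * I * u)) :
    O = P + (a + c + (b + e) * I) / 2 * u ∧ a * c = b * e := by
  set z := (O - P) / u
  have hOz : O = P + z * u := by rw [div_mul_cancel₀ _ hu, add_sub_cancel]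
  have hdist_sq : ∀ w w' : ℂ, dist O (P + w * u) = dist O (P + w' * u) →
      (z.re - w.re) ^ 2 + (z.im - w.im) ^ 2 = (z.re - w'.re) ^ 2 + (z.im - w'.im) ^ 2 := by
    intro w w' h
    rw [hOz, dist_add_mul_add_mul, dist_add_mul_add_mul, mul_left_inj' (norm_ne_zero_iff.2 hu),
      dist_eq_re_im, dist_eq_re_im, Real.sqrt_inj (by positivity) (by positivity)] at h
    exact h
  obtain ⟨h12, h23, h34⟩ := hO
  have e12 := hdist_sq _ _ h12
  have e23 := hdist_sq _ _ h23
  have e34 := hdist_sq _ _ h34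
  simp only [ofReal_re, ofReal_im, mul_re, mul_im, I_re, I_im, mul_zero, mul_one, sub_zero,
    sub_self, add_zero] at e12 e23 e34
  have hre : 2 * z.re = a + c := by
    have hac' : a - c ≠ 0 := fun h => (mul_self_nonneg c).not_gt (sub_eq_zero.1 h ▸ hac)
    exact (mul_left_cancel₀ hac' (by linear_combination e12 + e23)).symm
  have him : 2 * z.im = b + e := by
    have hbe' : b - e ≠ 0 := fun h => (mul_self_nonneg e).not_gt (sub_eq_zero.1 h ▸ hbe)
    exact (mul_left_cancel₀ hbe' (by linear_combination e23 + e34)).symm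
  refine ⟨?_, ?_⟩
  · rw [hOz]
    congr 2
    apply Complex.ext <;>
      simp only [div_ofNat_re, div_ofNat_im, add_re, add_im, ofReal_re, ofReal_im, mul_re, mul_im,
        I_re, I_im, mul_zero, mul_one, add_zero, zero_add, sub_self] <;>
      linarith
  · linear_combination -e12 - a * hre + b * him

end Frame

lemma exists_eq_ofReal_mul_I_mul {z u : ℂ} (hu : u ≠ 0) (h : u.re * z.re + u.im * z.im = 0) :
    ∃ k : ℝ, z = k * (I * u) := by
  have hn : u.re ^ 2 + u.im ^ 2 ≠ 0 := by
    rw [sq, sq, ← normSq_apply]; exact normSq_eq_zero.not.2 hu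
  refine ⟨(u.re * z.im - u.im * z.re) / (u.re ^ 2 + u.im ^ 2), ?_⟩
  apply Complex.ext <;> simp only [mul_re, mul_im, ofReal_re, ofReal_im, I_re, I_im] <;>
    field_simp
  · linear_combination u.re * h
  · linear_combination u.im * h

lemma exists_coords_of_mem_openSegment {A C P w : ℂ} {k : ℝ} (hAC : A ≠ C) (hw : C - A = k * w)
    (hP : P ∈ openSegment ℝ A C) : ∃ a c : ℝ, a * c < 0 ∧ A = P + a * w ∧ C = P + c * w := by
  obtain ⟨s, t, hs, ht, hst, rfl⟩ := hP
  have hk : k ≠ 0 := by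
    rintro rfl
    exact hAC (sub_eq_zero.1 (by simpa using hw)).symm
  have hst' : (s : ℂ) + t = 1 := by exact_mod_cast hst
  refine ⟨-(t * k), s * k, by nlinarith [mul_pos (mul_pos hs ht) (sq_pos_of_ne_zero hk)], ?_, ?_⟩
  · simp only [real_smul]; push_cast
    linear_combination -(t * hw) - A * hst'
  · simp only [real_smul]; push_cast
    linear_combination s * hw - C * hst'

section ConvexQuad

variable {A₁ A₂ A₃ A₄ IP : ℂ}

lemma IsConvexQuad.diag_ne (hconv : IsConvexQuad A₁ A₂ A₃ A₄) : A₁ ≠ A₃ ∧ A₂ ≠ A₄ := by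
  obtain ⟨-, -, h₃, h₄, -⟩ := hconv
  exact ⟨fun h => h₃ (subset_convexHull ℝ _ (by simp [h])),
    fun h => h₄ (subset_convexHull ℝ _ (by simp [h]))⟩

lemma IsConvexQuad.mem_openSegment (hconv : IsConvexQuad A₁ A₂ A₃ A₄)
    (hIP : IsDiagPoint IP A₁ A₂ A₃ A₄) :
    IP ∈ openSegment ℝ A₁ A₃ ∧ IP ∈ openSegment ℝ A₂ A₄ := by
  obtain ⟨h₁, h₂, h₃, h₄, -⟩ := hconv
  obtain ⟨h13, h24⟩ := hIP
  refine ⟨mem_openSegment_of_ne_left_right ?_ ?_ h13, mem_openSegment_of_ne_left_right ?_ ?_ h24⟩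
  · rintro rfl; exact h₁ (segment_subset_convexHull (by simp) (by simp) h24)
  · rintro rfl; exact h₃ (segment_subset_convexHull (by simp) (by simp) h24)
  · rintro rfl; exact h₂ (segment_subset_convexHull (by simp) (by simp) h13)
  · rintro rfl; exact h₄ (segment_subset_convexHull (by simp) (by simp) h13)

lemma IsConvexQuad.exists_frame (hconv : IsConvexQuad A₁ A₂ A₃ A₄)
    (hIP : IsDiagPoint IP A₁ A₂ A₃ A₄) (horth : Orthodiagonal A₁ A₂ A₃ A₄) :
    ∃ u : ℂ, u ≠ 0 ∧ ∃ a b c e : ℝ, a * c < 0 ∧ b * e < 0 ∧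
      A₁ = IP + a * u ∧ A₂ = IP + b * I * u ∧ A₃ = IP + c * u ∧ A₄ = IP + e * I * u := by
  obtain ⟨h13, h24⟩ := hconv.diag_ne
  obtain ⟨hIP13, hIP24⟩ := hconv.mem_openSegment hIP
  have hu : A₃ - A₁ ≠ 0 := sub_ne_zero.2 h13.symm
  obtain ⟨k, hk⟩ := exists_eq_ofReal_mul_I_mul hu horth
  obtain ⟨a, c, hac, hA₁, hA₃⟩ :=
    exists_coords_of_mem_openSegment (k := 1) h13 (by rw [ofReal_one, one_mul]) hIP13
  obtain ⟨b, e, hbe, hA₂, hA₄⟩ := exists_coords_of_mem_openSegment h24 hk hIP24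
  exact ⟨A₃ - A₁, hu, a, b, c, e, hac, hbe, hA₁, by rw [hA₂, mul_assoc], hA₃,
    by rw [hA₄, mul_assoc]⟩

end ConvexQuad

theorem cyclic_orthodiagonal_has_besant_ellipse_general
    (A₁ A₂ A₃ A₄ EP IP : ℂ)
    (hconv : IsConvexQuad A₁ A₂ A₃ A₄)
    (hEP : IsCircCenter EP A₁ A₂ A₃ A₄)
    (hIP : IsDiagPoint IP A₁ A₂ A₃ A₄)
    (horth : Orthodiagonal A₁ A₂ A₃ A₄) :
    ∃ (E : Set ℂ) (a : ℝ), IsEllipse E EP IP a ∧ InscribedInQuad E A₁ A₂ A₃ A₄ := by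
  obtain ⟨u, hu, a, b, c, e, hac, hbe, rfl, rfl, rfl, rfl⟩ := hconv.exists_frame hIP horth
  obtain ⟨rfl, hacbe⟩ := hEP.eq_of_frame hu hac hbe
  obtain ⟨r, hr⟩ : ∃ r : ℝ, 4 * r = √((a - c) ^ 2 + (b - e) ^ 2) * ‖u‖ :=
    ⟨_, mul_div_cancel₀ _ four_ne_zero⟩
  have hca : c * a < 0 := by rwa [mul_comm]
  refine ⟨_, r, ⟨dist_center_lt_of_frame hu hac hacbe hr, rfl⟩, ?_, ?_, ?_, ?_⟩
  · exact tangentToSide_of_frame a c b e hu hac hacbe rfl hr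
  · exact (tangentToSide_of_frame c a b e hu hca (by linear_combination hacbe)
      (by ring) (by rw [hr]; ring_nf)).symm
  · exact tangentToSide_of_frame c a e b hu hca (by linear_combination hacbe)
      (by ring) (by rw [hr]; ring_nf)
  · exact (tangentToSide_of_frame a c e b hu hac (by linear_combination hacbe)
      (by ring) (by rw [hr]; ring_nf)).symm

/-- A cyclic, orthodiagonal convex quadrilateral which is not a
parallelogram admits an inscribed ellipse whose foci are the circumcenter `EP` and the
diagonal intersection point `IP`. -/
theorem cyclic_orthodiagonal_has_besant_ellipse
    (A₁ A₂ A₃ A₄ EP IP : ℂ)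
    (hconv : IsConvexQuad A₁ A₂ A₃ A₄)
    (hEP : IsCircCenter EP A₁ A₂ A₃ A₄)
    (hIP : IsDiagPoint IP A₁ A₂ A₃ A₄)
    (hnp : ¬ IsParallelogram A₁ A₂ A₃ A₄)
    (horth : Orthodiagonal A₁ A₂ A₃ A₄) :
    ∃ (E : Set ℂ) (a : ℝ), IsEllipse E EP IP a ∧ InscribedInQuad E A₁ A₂ A₃ A₄ :=
  cyclic_orthodiagonal_has_besant_ellipse_general A₁ A₂ A₃ A₄ EP IP hconv hEP hIP horth
end
end

section
/- If Q is an orthodiagonal convex quadrilateral in ℝ², then the midpoint quadrilateral Q_M is cyclic. Furthermore, if Q is also cyclic and C₀ and EP denote the centers of the circles circumscribed about Q_M and about Q, respectively, then C₀ = (EP + IP)/2, where IP is the intersection point of the diagonals of Q. -/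
open Set

noncomputable section

/-! With `u = A₃ - A₁` and `v = A₄ - A₂`, the midpoints of the sides are `G ± (u + v)/4` and
`G ± (u - v)/4` around the centroid `G`, and `u ⊥ v` gives `‖u + v‖ = ‖u - v‖`, so `G` is
equidistant from them. Since `u` and `v` span the plane, a vector orthogonal to both vanishes.
A point equidistant from the midpoints lies on the perpendicular bisectors of the diagonals of the
midpoint parallelogram, which forces it to be `G`. And `EP + IP - 2G` is orthogonal to `u` and
`v`, because `EP` lies on the perpendicular bisectors of the diagonals of `Q` and `IP` on the
diagonals themselves. -/

open Module
open scoped RealInnerProductSpace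

section InnerProductSpace

variable {E : Type*} [NormedAddCommGroup E] [InnerProductSpace ℝ E]

theorem eq_zero_of_inner_eq_zero_of_orthogonal_pair [FiniteDimensional ℝ E]
    (hE : finrank ℝ E = 2) {u v w : E} (hu : u ≠ 0) (hv : v ≠ 0) (huv : ⟪u, v⟫ = 0)
    (hwu : ⟪w, u⟫ = 0) (hwv : ⟪w, v⟫ = 0) : w = 0 := by
  have hli : LinearIndependent ℝ ![u, v] :=
    linearIndependent_of_ne_zero_of_inner_eq_zero (by simp [Fin.forall_fin_two, hu, hv])
      (by intro i j hij; fin_cases i <;> fin_cases j <;> simp_all [real_inner_comm])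
  have hw : w ∈ Submodule.span ℝ {u, v} := by
    rw [← Matrix.range_cons_cons_empty, hli.span_eq_top_of_card_eq_finrank (by simp [hE])]
    exact Submodule.mem_top
  obtain ⟨a, b, hab⟩ := Submodule.mem_span_pair.mp hw
  rw [← inner_self_eq_zero (𝕜 := ℝ)]
  nth_rw 2 [← hab]
  rw [inner_add_right, inner_smul_right, inner_smul_right, hwu, hwv]
  ring

theorem inner_sub_midpoint_eq_zero_of_dist_eq {a b c : E} (h : dist c a = dist c b) :
    ⟪c - midpoint ℝ a b, b - a⟫ = 0 :=
  AffineSubspace.mem_perpBisector_iff_inner_eq_zero.mp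
    (AffineSubspace.mem_perpBisector_iff_dist_eq.mpr h)

theorem inner_sub_midpoint_eq_zero_of_mem_segment {a b p x : E} (hp : p ∈ segment ℝ a b)
    (h : ⟪b - a, x⟫ = 0) : ⟪p - midpoint ℝ a b, x⟫ = 0 := by
  obtain ⟨θ, -, rfl⟩ := (segment_eq_image' ℝ a b ▸ hp :)
  rw [midpoint_eq_smul_add, invOf_eq_inv,
    show a + θ • (b - a) - (2⁻¹ : ℝ) • (a + b) = (θ - 2⁻¹) • (b - a) by module,
    inner_smul_left, h, mul_zero]

end InnerProductSpace

theorem Complex.midpoint_eq_add_div_two (a b : ℂ) : midpoint ℝ a b = (a + b) / 2 := by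
  rw [midpoint_eq_smul_add, invOf_eq_inv, Complex.real_smul]; push_cast; ring

theorem Complex.inner_sub_add_div_two_eq_zero_of_dist_eq {a b c : ℂ} (h : dist c a = dist c b) :
    ⟪c - (a + b) / 2, b - a⟫ = 0 := by
  simpa only [Complex.midpoint_eq_add_div_two] using inner_sub_midpoint_eq_zero_of_dist_eq h

theorem Complex.inner_sub_add_div_two_eq_zero_of_mem_segment {a b p x : ℂ}
    (hp : p ∈ segment ℝ a b) (h : ⟪b - a, x⟫ = 0) : ⟪p - (a + b) / 2, x⟫ = 0 := by
  simpa only [Complex.midpoint_eq_add_div_two] using inner_sub_midpoint_eq_zero_of_mem_segment hp h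

theorem IsConvexQuad.diagonals_ne_zero {A₁ A₂ A₃ A₄ : ℂ} (h : IsConvexQuad A₁ A₂ A₃ A₄) :
    A₃ - A₁ ≠ 0 ∧ A₄ - A₂ ≠ 0 := by
  refine ⟨sub_ne_zero.mpr fun h₃₁ => h.2.2.1 ?_, sub_ne_zero.mpr fun h₄₂ => h.2.2.2.1 ?_⟩
  · exact subset_convexHull ℝ _ (by simp [h₃₁])
  · exact subset_convexHull ℝ _ (by simp [h₄₂])

namespace Orthodiagonal

variable {A₁ A₂ A₃ A₄ : ℂ}

theorem inner_eq_zero (h : Orthodiagonal A₁ A₂ A₃ A₄) :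
    ⟪A₃ - A₁, A₄ - A₂⟫ = 0 := by
  rw [Complex.inner, ← h]
  simp only [Complex.mul_re, Complex.conj_re, Complex.conj_im]
  ring

theorem isCircCenter_midpoints (h : Orthodiagonal A₁ A₂ A₃ A₄) :
    IsCircCenter ((A₁ + A₂ + A₃ + A₄) / 4)
      ((A₁ + A₂) / 2) ((A₂ + A₃) / 2) ((A₃ + A₄) / 2) ((A₄ + A₁) / 2) := by
  have hsum_diff : ‖(A₄ - A₂) + (A₃ - A₁)‖ = ‖(A₄ - A₂) - (A₃ - A₁)‖ :=
    (norm_sub_eq_norm_add h.inner_eq_zero).symm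
  have hdiv : ∀ z : ℂ, ‖z / 4‖ = ‖z‖ / 4 := fun z => by simp
  have h₁ : dist ((A₁ + A₂ + A₃ + A₄) / 4) ((A₁ + A₂) / 2) = ‖(A₄ - A₂) + (A₃ - A₁)‖ / 4 := by
    rw [dist_eq_norm, ← hdiv]; ring_nf
  have h₂ : dist ((A₁ + A₂ + A₃ + A₄) / 4) ((A₂ + A₃) / 2) = ‖(A₄ - A₂) + (A₃ - A₁)‖ / 4 := by
    rw [dist_eq_norm, hsum_diff, ← hdiv]; ring_nf
  have h₃ : dist ((A₁ + A₂ + A₃ + A₄) / 4) ((A₃ + A₄) / 2) = ‖(A₄ - A₂) + (A₃ - A₁)‖ / 4 := by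
    rw [dist_eq_norm, ← norm_neg, ← hdiv]; ring_nf
  have h₄ : dist ((A₁ + A₂ + A₃ + A₄) / 4) ((A₄ + A₁) / 2) = ‖(A₄ - A₂) + (A₃ - A₁)‖ / 4 := by
    rw [dist_eq_norm, hsum_diff, ← norm_neg, ← hdiv]; ring_nf
  exact ⟨h₁.trans h₂.symm, h₂.trans h₃.symm, h₃.trans h₄.symm⟩

theorem eq_of_isCircCenter_midpoints (h : Orthodiagonal A₁ A₂ A₃ A₄) (h₁₃ : A₃ - A₁ ≠ 0)
    (h₂₄ : A₄ - A₂ ≠ 0) {C : ℂ}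
    (hC : IsCircCenter C ((A₁ + A₂) / 2) ((A₂ + A₃) / 2) ((A₃ + A₄) / 2) ((A₄ + A₁) / 2)) :
    C = (A₁ + A₂ + A₃ + A₄) / 4 := by
  have hsum : ⟪C - (A₁ + A₂ + A₃ + A₄) / 4, ((A₄ - A₂) + (A₃ - A₁)) / 2⟫ = 0 := by
    convert Complex.inner_sub_add_div_two_eq_zero_of_dist_eq (hC.1.trans hC.2.1) using 2 <;> ring
  have hdiff : ⟪C - (A₁ + A₂ + A₃ + A₄) / 4, ((A₄ - A₂) - (A₃ - A₁)) / 2⟫ = 0 := by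
    convert Complex.inner_sub_add_div_two_eq_zero_of_dist_eq (hC.2.1.trans hC.2.2) using 2 <;> ring
  rw [← sub_eq_zero]
  refine eq_zero_of_inner_eq_zero_of_orthogonal_pair Complex.finrank_real_complex h₁₃ h₂₄
    h.inner_eq_zero ?_ ?_
  · rw [show A₃ - A₁ = ((A₄ - A₂) + (A₃ - A₁)) / 2 - ((A₄ - A₂) - (A₃ - A₁)) / 2 by ring,
      inner_sub_right, hsum, hdiff, sub_zero]
  · rw [show A₄ - A₂ = ((A₄ - A₂) + (A₃ - A₁)) / 2 + ((A₄ - A₂) - (A₃ - A₁)) / 2 by ring,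
      inner_add_right, hsum, hdiff, add_zero]

theorem add_eq_of_isCircCenter_of_isDiagPoint (h : Orthodiagonal A₁ A₂ A₃ A₄)
    (h₁₃ : A₃ - A₁ ≠ 0) (h₂₄ : A₄ - A₂ ≠ 0) {O P : ℂ} (hO : IsCircCenter O A₁ A₂ A₃ A₄)
    (hP : IsDiagPoint P A₁ A₂ A₃ A₄) :
    O + P = (A₁ + A₂ + A₃ + A₄) / 2 := by
  have hO₁₃ : ⟪O - (A₁ + A₃) / 2, A₃ - A₁⟫ = 0 :=
    Complex.inner_sub_add_div_two_eq_zero_of_dist_eq (hO.1.trans hO.2.1)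
  have hO₂₄ : ⟪O - (A₂ + A₄) / 2, A₄ - A₂⟫ = 0 :=
    Complex.inner_sub_add_div_two_eq_zero_of_dist_eq (hO.2.1.trans hO.2.2)
  have hP₁₃ : ⟪P - (A₁ + A₃) / 2, A₄ - A₂⟫ = 0 :=
    Complex.inner_sub_add_div_two_eq_zero_of_mem_segment hP.1 h.inner_eq_zero
  have hP₂₄ : ⟪P - (A₂ + A₄) / 2, A₃ - A₁⟫ = 0 :=
    Complex.inner_sub_add_div_two_eq_zero_of_mem_segment hP.2
      (real_inner_comm (A₃ - A₁) (A₄ - A₂) ▸ h.inner_eq_zero)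
  rw [← sub_eq_zero]
  refine eq_zero_of_inner_eq_zero_of_orthogonal_pair Complex.finrank_real_complex h₁₃ h₂₄
    h.inner_eq_zero ?_ ?_
  · rw [show O + P - (A₁ + A₂ + A₃ + A₄) / 2 = (O - (A₁ + A₃) / 2) + (P - (A₂ + A₄) / 2) by ring,
      inner_add_left, hO₁₃, hP₂₄, add_zero]
  · rw [show O + P - (A₁ + A₂ + A₃ + A₄) / 2 = (O - (A₂ + A₄) / 2) + (P - (A₁ + A₃) / 2) by ring,
      inner_add_left, hO₂₄, hP₁₃, add_zero]

end Orthodiagonal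

/-- If a convex quadrilateral is orthodiagonal then its midpoint
quadrilateral `Q_M` is cyclic; moreover, if the quadrilateral is also cyclic with
circumcenter `EP`, and `C₀` is the circumcenter of `Q_M`, then `C₀ = (EP + IP)/2`. -/
theorem orthodiagonal_midpoint_quad
    (A₁ A₂ A₃ A₄ : ℂ)
    (hconv : IsConvexQuad A₁ A₂ A₃ A₄)
    (horth : Orthodiagonal A₁ A₂ A₃ A₄) :
    (∃ c : ℂ, IsCircCenter c ((A₁ + A₂) / 2) ((A₂ + A₃) / 2) ((A₃ + A₄) / 2) ((A₄ + A₁) / 2)) ∧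
    (∀ EP IP C₀ : ℂ, IsCircCenter EP A₁ A₂ A₃ A₄ → IsDiagPoint IP A₁ A₂ A₃ A₄ →
      IsCircCenter C₀ ((A₁ + A₂) / 2) ((A₂ + A₃) / 2) ((A₃ + A₄) / 2) ((A₄ + A₁) / 2) →
      C₀ = (EP + IP) / 2) := by
  obtain ⟨h₁₃, h₂₄⟩ := hconv.diagonals_ne_zero
  refine ⟨⟨_, horth.isCircCenter_midpoints⟩, fun EP IP C₀ hEP hIP hC₀ => ?_⟩
  rw [horth.eq_of_isCircCenter_midpoints h₁₃ h₂₄ hC₀,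
    horth.add_eq_of_isCircCenter_of_isDiagPoint h₁₃ h₂₄ hEP hIP]
  ring
end
end

section
/- Let Q_{s,t,v,w} be the convex quadrilateral with vertices (0,0), (0,1), (s,t), (v,w), where s,t,v > 0 and t ≥ w. If Q_{s,t,v,w} is both cyclic and orthodiagonal, then H = 0, where H = svβ − tI with β = s² + t² and I = t³ − t² + s²(t+1). Equivalently, v = tI/(sβ). -/
open Set

noncomputable section

/-- If `Q_{s,t,v,w}` is cyclic and orthodiagonal then `H = svβ − tI = 0`,
equivalently `v = tI/(sβ)`, where `β = s² + t²` and `I = t³ − t² + s²(t+1)`. -/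
theorem Qstvw_cyclic_orthodiagonal_H_eq_zero
    (s t v w : ℝ) (hs : 0 < s) (ht : 0 < t) (hv : 0 < v) (hw : w ≤ t)
    (hconv : IsConvexQuad 0 Complex.I ((s : ℂ) + t * Complex.I) ((v : ℂ) + w * Complex.I))
    (hcyc : ∃ c : ℂ, IsCircCenter c 0 Complex.I ((s : ℂ) + t * Complex.I)
      ((v : ℂ) + w * Complex.I))
    (horth : Orthodiagonal 0 Complex.I ((s : ℂ) + t * Complex.I) ((v : ℂ) + w * Complex.I)) :
    s * v * (s ^ 2 + t ^ 2) - t * (t ^ 3 - t ^ 2 + s ^ 2 * (t + 1)) = 0 ∧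
    v = t * (t ^ 3 - t ^ 2 + s ^ 2 * (t + 1)) / (s * (s ^ 2 + t ^ 2)) := by
  obtain ⟨c, h1, h2, h3⟩ := hcyc
  -- turn the distance equalities into squared equalities
  have q1 : dist c 0 ^ 2 = dist c Complex.I ^ 2 := by rw [h1]
  have q2 : dist c Complex.I ^ 2 = dist c ((s : ℂ) + t * Complex.I) ^ 2 := by rw [h2]
  have q3 : dist c ((s : ℂ) + t * Complex.I) ^ 2 = dist c ((v : ℂ) + w * Complex.I) ^ 2 := by
    rw [h3]
  simp only [Complex.dist_eq, Complex.sq_norm,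
    Complex.normSq_apply, Complex.sub_re, Complex.sub_im, Complex.add_re, Complex.add_im,
    Complex.mul_re, Complex.mul_im, Complex.I_re, Complex.I_im, Complex.ofReal_re,
    Complex.ofReal_im, Complex.zero_re, Complex.zero_im] at q1 q2 q3
  have eorth : s * v + t * (w - 1) = 0 := by
    simp only [Orthodiagonal, Complex.sub_re, Complex.sub_im, Complex.add_re, Complex.add_im,
      Complex.mul_re, Complex.mul_im, Complex.I_re, Complex.I_im, Complex.ofReal_re,
      Complex.ofReal_im, Complex.zero_re, Complex.zero_im] at horth
    linarith [horth]
  set x := c.re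
  set y := c.im
  have hy : y = 1 / 2 := by linear_combination q1 / 2
  have estar : s * (v ^ 2 + w ^ 2 - w) - v * (s ^ 2 + t ^ 2 - t) = 0 := by
    have e2 : 2 * x * s + 2 * y * t = s ^ 2 + t ^ 2 := by linear_combination q1 + q2
    have e3 : 2 * x * v + 2 * y * w = v ^ 2 + w ^ 2 := by linear_combination q1 + q2 + q3
    have hx : 2 * x * s = s ^ 2 + t ^ 2 - t := by rw [hy] at e2; linarith
    have hxv : 2 * x * v + w = v ^ 2 + w ^ 2 := by rw [hy] at e3; linarith
    linear_combination v * hx - s * hxv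
  have hH : v * (s * v * (s ^ 2 + t ^ 2) - t * (t ^ 3 - t ^ 2 + s ^ 2 * (t + 1))) = 0 := by
    linear_combination t ^ 2 * estar + s * (s * v - t * w) * eorth
  have hH0 : s * v * (s ^ 2 + t ^ 2) - t * (t ^ 3 - t ^ 2 + s ^ 2 * (t + 1)) = 0 := by
    rcases mul_eq_zero.1 hH with h | h
    · exact absurd h (ne_of_gt hv)
    · exact h
  refine ⟨hH0, ?_⟩
  have hden : s * (s ^ 2 + t ^ 2) ≠ 0 := by positivity
  field_simp
  linarith [hH0]
end
end

section
/- Let Q_{s,t,v,w} be the convex quadrilateral with vertices (0,0), (0,1), (s,t), (v,w), where s,t,v > 0, t ≥ w, and Q_{s,t,v,w} is not a trapezoid. For any ellipse E₀ inscribed in Q_{s,t,v,w}, corresponding to the parameter r ∈ (0,1) in the parametrization of inscribed ellipses, the center of E₀ is (x₀, y₀) where x₀ = sv/(2τ) and y₀ = ((s − N)r + vt)/(2τ), with τ = (s − v)r + v and N = vt − ws. -/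
open Set

noncomputable section

/-- The quadratic polynomial `ψ_r(x,y)` whose zero set is the inscribed ellipse of
`Q_{s,t,v,w}` with parameter `r`; here `N = vt − ws`. -/
def psi (s t v w r x y : ℝ) : ℝ :=
  (((w - 1) ^ 2 * s ^ 2 - 2 * v * (w * t + t - 2 * w) * s + t ^ 2 * v ^ 2) * r ^ 2 +
      2 * v * (s * t - 2 * w * s - t * (v * t - w * s)) * r + t ^ 2 * v ^ 2) * x ^ 2 +
    (-(2 * v * s) * (2 * (v - s) * r ^ 2 + (s - 2 * v - (v * t - w * s)) * r + v * t)) *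
      (x * y) +
    (s ^ 2 * v ^ 2) * y ^ 2 +
    (2 * s * v * r * (((v * t - w * s) - s) * r - (v * t - w * s) + s * w)) * x +
    (-(2 * s ^ 2 * v ^ 2 * r)) * y + s ^ 2 * v ^ 2 * r ^ 2

/-- The center of the inscribed ellipse of `Q_{s,t,v,w}` with parameter
`r ∈ (0,1)` is `(sv/(2τ), ((s − N)r + vt)/(2τ))`, where `τ = (s−v)r + v`, `N = vt − ws`. -/
theorem Qstvw_inscribed_ellipse_center
    (s t v w r : ℝ) (hs : 0 < s) (ht : 0 < t) (hv : 0 < v) (hw : w ≤ t)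
    (hconv : IsConvexQuad 0 Complex.I ((s : ℂ) + t * Complex.I) ((v : ℂ) + w * Complex.I))
    (hntrap : ¬ IsTrapezoid 0 Complex.I ((s : ℂ) + t * Complex.I) ((v : ℂ) + w * Complex.I))
    (hr : r ∈ Set.Ioo (0 : ℝ) 1)
    (E : Set ℂ) (f₁ f₂ : ℂ) (a : ℝ)
    (hE : IsEllipse E f₁ f₂ a)
    (hins : InscribedInQuad E 0 Complex.I ((s : ℂ) + t * Complex.I) ((v : ℂ) + w * Complex.I))
    (heq : E = {z : ℂ | psi s t v w r z.re z.im = 0}) :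
    (f₁ + f₂) / 2 =
      ((s * v / (2 * ((s - v) * r + v)) : ℝ) : ℂ) +
        (((s - (v * t - w * s)) * r + v * t) / (2 * ((s - v) * r + v)) : ℝ) * Complex.I := by

  obtain ⟨hr0, hr1⟩ := hr
  set τ : ℝ := (s - v) * r + v with hτdef
  have hτpos : 0 < τ := by nlinarith [mul_pos hs hr0, mul_pos hv (sub_pos.2 hr1)]
  have hτ : τ ≠ 0 := ne_of_gt hτpos
  set x₀ : ℝ := s * v / (2 * τ) with hx₀
  set y₀ : ℝ := ((s - (v * t - w * s)) * r + v * t) / (2 * τ) with hy₀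
  set c' : ℂ := (x₀ : ℂ) + (y₀ : ℂ) * Complex.I with hc'
  -- symmetry of E about c'
  have hsym' : ∀ z ∈ E, 2 * c' - z ∈ E := by
    intro z hz
    rw [heq] at hz ⊢
    simp only [Set.mem_setOf_eq] at hz ⊢
    have hre : (2 * c' - z).re = 2 * x₀ - z.re := by simp [hc']
    have him : (2 * c' - z).im = 2 * y₀ - z.im := by simp [hc']
    rw [hre, him]
    have key : psi s t v w r (2 * x₀ - z.re) (2 * y₀ - z.im)
        = psi s t v w r z.re z.im := by
      unfold psi
      rw [hx₀, hy₀]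
      field_simp
      ring
    rw [key]; exact hz
  obtain ⟨hfa, hEeq⟩ := hE
  set c : ℂ := (f₁ + f₂) / 2 with hcdef
  have hsym : ∀ z ∈ E, 2 * c - z ∈ E := by
    intro z hz
    rw [hEeq] at hz ⊢
    simp only [EllipseSet, Set.mem_setOf_eq] at hz ⊢
    have h1 : 2 * c - z - f₁ = f₂ - z := by rw [hcdef]; ring
    have h2 : 2 * c - z - f₂ = f₁ - z := by rw [hcdef]; ring
    rw [dist_eq_norm, dist_eq_norm, h1, h2]
    rw [dist_eq_norm, dist_eq_norm] at hz
    rw [show f₂ - z = -(z - f₂) by ring, show f₁ - z = -(z - f₁) by ring,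
      norm_neg, norm_neg]
    linarith
  -- suppose the centers differ
  show c = c'
  by_contra hne
  set d : ℂ := 2 * (c' - c) with hd
  have hdne : d ≠ 0 := by
    rw [hd]
    intro h
    apply hne
    have : c' - c = 0 := by
      have h2 : (2 : ℂ) ≠ 0 := two_ne_zero
      exact (mul_eq_zero.mp h).resolve_left h2
    linear_combination -this
  -- E is nonempty
  obtain ⟨ζ, hζseg, hζset⟩ := hins.1
  have hζE : ζ ∈ E := by
    have : ζ ∈ E ∩ LineThrough 0 Complex.I := by rw [hζset]; exact rfl
    exact this.1
  -- translation invariance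
  have htrans : ∀ z ∈ E, z + d ∈ E := by
    intro z hz
    have h1 := hsym z hz
    have h2 := hsym' _ h1
    have : 2 * c' - (2 * c - z) = z + d := by rw [hd]; ring
    rwa [this] at h2
  have hiter : ∀ n : ℕ, ζ + (n : ℂ) * d ∈ E := by
    intro n
    induction n with
    | zero => simpa using hζE
    | succ k ih =>
        have := htrans _ ih
        have he : ζ + (k : ℂ) * d + d = ζ + ((k + 1 : ℕ) : ℂ) * d := by
          push_cast; ring
        rwa [he] at this
  have hbound : ∀ z ∈ E, dist z f₁ ≤ 2 * a := by
    intro z hz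
    rw [hEeq] at hz
    simp only [EllipseSet, Set.mem_setOf_eq] at hz
    have := dist_nonneg (x := z) (y := f₂)
    linarith
  have hdpos : 0 < ‖d‖ := norm_pos_iff.mpr hdne
  obtain ⟨n, hn⟩ := exists_nat_gt ((2 * a + dist ζ f₁) / ‖d‖)
  have hn' : 2 * a + dist ζ f₁ < (n : ℝ) * ‖d‖ := by
    rw [div_lt_iff₀ hdpos] at hn
    linarith
  have h1 : dist (ζ + (n : ℂ) * d) f₁ ≤ 2 * a := hbound _ (hiter n)
  have h2 : (n : ℝ) * ‖d‖ - dist ζ f₁ ≤ dist (ζ + (n : ℂ) * d) f₁ := by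
    have : ‖(n : ℂ) * d‖ ≤ ‖ζ + (n : ℂ) * d - f₁‖ + ‖ζ - f₁‖ := by
      have := norm_sub_le (ζ + (n : ℂ) * d - f₁) (ζ - f₁)
      simpa using this
    rw [dist_eq_norm]
    have hnd : ‖(n : ℂ) * d‖ = (n : ℝ) * ‖d‖ := by
      rw [norm_mul]
      simp
    rw [dist_eq_norm]
    rw [hnd] at this
    linarith
  linarith
end
end

section
/- Let z₁, z₂, z₃ be three distinct, noncollinear points in the complex plane and let L₁, L₂, L₃ be the line segments joining z₂ and z₃, z₁ and z₃, and z₁ and z₂ respectively. Suppose E₀ is an ellipse, not a circle, tangent to L₁, L₂, and L₃, with foci Z₁ and Z₂. Then there exist real numbers t₁, t₂, t₃ with t₁t₂t₃ > 0 and t₁ + t₂ + t₃ = 1 such that the function F(z) = t₁/(z − z₁) + t₂/(z − z₂) + t₃/(z − z₃) has zeros exactly Z₁ and Z₂. -/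
open Set

noncomputable section

/-!
For a vertex `V` of the triangle with neighbours `Y`, `W` put
`t_V = (V - Z₁) (V - Z₂) / ((V - Y) (V - W))`. Lagrange interpolation at the three vertices gives
`∑ t_V ∏ (z - other vertices) = (z - Z₁) (z - Z₂)` and `∑ t_V = 1`, so it suffices to show that
every `t_V` is a positive real.

The interior of the ellipse, `dist z Z₁ + dist z Z₂ < 2 a`, is convex and misses every tangent
line, hence lies strictly on one side of it; by the reflection property, the mirror image of `Z₁`
in a tangent line is at distance `2 a` from `Z₂`. Applied to the two sides through `V`, the
second fact makes the lines `V Z₁`, `V Z₂` isogonal in the angle at `V`, i.e. `t_V` is real. The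
first puts both foci inside the triangle, so `Z₁ - V` and `Z₂ - V` are positive combinations of
`Y - V` and `W - V`, and a real `t_V` must then be positive.
-/

open Complex ComplexConjugate

namespace Marden

def cross (z w : ℂ) : ℝ := z.re * w.im - z.im * w.re

lemma cross_eq_im (z w : ℂ) : cross z w = (conj z * w).im := by
  simp only [cross, mul_im, conj_re, conj_im]; ring

lemma cross_swap (z w : ℂ) : cross z w = -cross w z := by
  simp only [cross]; ring

lemma eq_ofReal_mul_of_cross_eq_zero {u w : ℂ} (hu : u ≠ 0) (h : cross u w = 0) :
    ∃ θ : ℝ, w = θ * u := by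
  have hreal : conj u * w = ((conj u * w).re : ℂ) := by
    rw [cross_eq_im] at h; exact Complex.ext rfl (by simpa using h)
  refine ⟨(conj u * w).re / normSq u, ?_⟩
  rw [ofReal_div, ← hreal, ← mul_conj]
  field_simp [hu]

lemma cross_ne_zero_of_not_collinear {A B C : ℂ} (h : ¬Collinear ℝ ({A, B, C} : Set ℂ)) :
    cross (B - A) (C - A) ≠ 0 := by
  intro h0
  apply h
  rcases eq_or_ne A B with rfl | hAB
  · simpa using collinear_pair ℝ A C
  obtain ⟨θ, hθ⟩ := eq_ofReal_mul_of_cross_eq_zero (sub_ne_zero.mpr hAB.symm) h0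
  rw [Set.pair_comm, Set.insert_comm]
  apply collinear_insert_of_mem_affineSpan_pair
  rw [show C = AffineMap.lineMap A B θ by
    rw [AffineMap.lineMap_apply_module', real_smul, ← hθ]; ring]
  exact AffineMap.lineMap_mem_affineSpan_pair (θ : ℝ) A B

lemma lineThrough_comm (P Q : ℂ) : LineThrough P Q = LineThrough Q P := by
  ext z
  constructor <;> rintro ⟨θ, rfl⟩ <;>
    exact ⟨1 - θ, by simp only [real_smul, ofReal_sub, ofReal_one]; ring⟩

lemma mem_lineThrough_iff_cross_eq_zero {P Q z : ℂ} (hPQ : P ≠ Q) :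
    z ∈ LineThrough P Q ↔ cross (Q - P) (z - P) = 0 := by
  constructor
  · rintro ⟨θ, rfl⟩
    simp only [cross, add_sub_cancel_left, real_smul, mul_re, mul_im, ofReal_re, ofReal_im]
    ring
  · intro h
    obtain ⟨θ, hθ⟩ := eq_ofReal_mul_of_cross_eq_zero (sub_ne_zero.mpr hPQ.symm) h
    exact ⟨θ, by rw [real_smul, ← hθ]; ring⟩

lemma add_smul_sub_mem_lineThrough {P Q z ζ : ℂ} (hz : z ∈ LineThrough P Q)
    (hζ : ζ ∈ LineThrough P Q) (s : ℝ) : z + s • (z - ζ) ∈ LineThrough P Q := by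
  obtain ⟨θ₁, rfl⟩ := hz
  obtain ⟨θ₂, rfl⟩ := hζ
  exact ⟨θ₁ + s * (θ₁ - θ₂), by simp only [real_smul]; push_cast; ring⟩

section NormedSpace

variable {E : Type*} [NormedAddCommGroup E] [NormedSpace ℝ E]

lemma exists_mem_openSegment_eq_zero {g : E → ℝ} (hg : Continuous g) {x y : E}
    (h : g x * g y < 0) : ∃ z ∈ openSegment ℝ x y, g z = 0 := by
  have hφ : ContinuousOn (fun θ : ℝ => g (x + θ • (y - x))) (Icc 0 1) := by fun_prop
  rw [openSegment_eq_image']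
  suffices h0 : (0 : ℝ) ∈ (fun θ : ℝ => g (x + θ • (y - x))) '' Ioo 0 1 by
    obtain ⟨θ, hθ, hθ0⟩ := h0
    exact ⟨_, ⟨θ, hθ, rfl⟩, hθ0⟩
  rcases mul_neg_iff.mp h with ⟨hx, hy⟩ | ⟨hx, hy⟩
  · exact intermediate_value_Ioo' zero_le_one hφ (by simp [hx, hy])
  · exact intermediate_value_Ioo zero_le_one hφ (by simp [hx, hy])

variable {F₁ F₂ : E} {c : ℝ}

lemma dist_add_dist_lt_of_mem_openSegment {x y z : E} (hx : dist x F₁ + dist x F₂ ≤ c)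
    (hy : dist y F₁ + dist y F₂ < c) (hz : z ∈ openSegment ℝ x y) :
    dist z F₁ + dist z F₂ < c := by
  obtain ⟨s, t, hs, ht, hst, rfl⟩ := hz
  have hconv : ConvexOn ℝ univ fun z => dist z F₁ + dist z F₂ :=
    (convexOn_dist F₁ convex_univ).add (convexOn_dist F₂ convex_univ)
  calc dist (s • x + t • y) F₁ + dist (s • x + t • y) F₂
      ≤ s * (dist x F₁ + dist x F₂) + t * (dist y F₁ + dist y F₂) :=
        hconv.2 (mem_univ x) (mem_univ y) hs.le ht.le hst
    _ < s * c + t * c := add_lt_add_of_le_of_lt (by gcongr) (by gcongr)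
    _ = c := by rw [← add_mul, hst, one_mul]

lemma exists_pos_dist_add_dist_eq {z v : E} (hz : dist z F₁ + dist z F₂ < c) (hv : v ≠ 0) :
    ∃ s : ℝ, 0 < s ∧ dist (z + s • v) F₁ + dist (z + s • v) F₂ = c := by
  set T := (c + dist z F₁) / ‖v‖
  have hT : 0 ≤ T := by
    have := dist_nonneg (x := z) (y := F₂)
    exact div_nonneg (by linarith [dist_nonneg (x := z) (y := F₁)]) (norm_nonneg v)
  have hfar : c ≤ dist (z + T • v) F₁ + dist (z + T • v) F₂ := by
    have h1 : dist (z + T • v) z = c + dist z F₁ := by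
      rw [dist_eq_norm, add_sub_cancel_left, norm_smul, Real.norm_of_nonneg hT,
        div_mul_cancel₀ _ (norm_ne_zero_iff.mpr hv)]
    linarith [dist_triangle (z + T • v) F₁ z, dist_comm z F₁,
      dist_nonneg (x := z + T • v) (y := F₂)]
  have hcont : ContinuousOn (fun s : ℝ => dist (z + s • v) F₁ + dist (z + s • v) F₂)
      (Icc 0 T) := by
    fun_prop
  obtain ⟨s, hs, hsc⟩ := intermediate_value_Ioc hT hcont (by simpa using And.intro hz hfar)
  exact ⟨s, hs.1, hsc⟩

end NormedSpace

lemma exists_mem_openSegment_mem_lineThrough {P Q x y : ℂ} (hPQ : P ≠ Q)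
    (h : cross (Q - P) (x - P) * cross (Q - P) (y - P) < 0) :
    ∃ z ∈ openSegment ℝ x y, z ∈ LineThrough P Q := by
  obtain ⟨z, hz, hz0⟩ := exists_mem_openSegment_eq_zero
    (g := fun w => cross (Q - P) (w - P)) (by unfold cross; fun_prop) h
  exact ⟨z, hz, (mem_lineThrough_iff_cross_eq_zero hPQ).mpr hz0⟩

def lineReflection (P Q w : ℂ) : ℂ := P + (Q - P) * conj (w - P) / conj (Q - P)

lemma dist_lineReflection_of_mem {P Q z : ℂ} (hPQ : P ≠ Q) (w : ℂ) (hz : z ∈ LineThrough P Q) :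
    dist z (lineReflection P Q w) = dist z w := by
  obtain ⟨θ, rfl⟩ := hz
  have hu : conj (Q - P) ≠ 0 := (map_ne_zero _).mpr (sub_ne_zero.mpr hPQ.symm)
  have h : P + θ • (Q - P) - lineReflection P Q w
      = (Q - P) * conj (P + θ • (Q - P) - w) / conj (Q - P) := by
    rw [show P + θ • (Q - P) - w = θ * (Q - P) - (w - P) by rw [real_smul]; ring, map_sub,
      map_mul, conj_ofReal, lineReflection, real_smul]
    field_simp
    ring
  rw [dist_eq_norm, h, norm_div, norm_mul, RCLike.norm_conj, RCLike.norm_conj,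
    mul_div_cancel_left₀ _ (norm_ne_zero_iff.mpr (sub_ne_zero.mpr hPQ.symm)), dist_eq_norm]

lemma cross_lineReflection {P Q : ℂ} (hPQ : P ≠ Q) (w : ℂ) :
    cross (Q - P) (lineReflection P Q w - P) = -cross (Q - P) (w - P) := by
  have hu : conj (Q - P) ≠ 0 := (map_ne_zero _).mpr (sub_ne_zero.mpr hPQ.symm)
  have h : conj (Q - P) * (lineReflection P Q w - P) = conj (conj (Q - P) * (w - P)) := by
    simp only [lineReflection, add_sub_cancel_left, map_mul, conj_conj]
    field_simp
  rw [cross_eq_im, cross_eq_im, h, conj_im]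

-- `u * conj c / conj u` is the reflection of `c` in the line `ℝ u`.
lemma im_div_eq_zero_of_normSq_eq {u v c d : ℂ} (huv : cross u v ≠ 0)
    (h : normSq (u * conj c / conj u - d) = normSq (v * conj c / conj v - d)) :
    (c * d / (u * v)).im = 0 := by
  have hu : u ≠ 0 := by rintro rfl; simp [cross] at huv
  have hv : v ≠ 0 := by rintro rfl; simp [cross] at huv
  have hu' : conj u ≠ 0 := (map_ne_zero _).mpr hu
  have hv' : conj v ≠ 0 := (map_ne_zero _).mpr hv
  have hnorm := congrArg ((↑) : ℝ → ℂ) h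
  rw [← mul_conj, ← mul_conj] at hnorm
  simp only [map_sub, map_div₀, map_mul, conj_conj] at hnorm
  field_simp at hnorm
  have hfactor :
      (u * conj v - conj u * v) * (conj c * conj d * (u * v) - c * d * (conj u * conj v)) = 0 := by
    linear_combination -hnorm
  have hcross : u * conj v - conj u * v ≠ 0 := by
    intro h0
    apply huv
    have h1 := congrArg im h0
    simp only [sub_im, mul_im, conj_re, conj_im, zero_im, cross] at h1 ⊢
    linarith
  have hreal := (mul_eq_zero.mp hfactor).resolve_left hcross
  rw [← conj_eq_iff_im, map_div₀, map_mul, map_mul,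
    div_eq_div_iff (mul_ne_zero hu' hv') (mul_ne_zero hu hv)]
  linear_combination hreal

lemma exists_pos_eq_mul_add_mul {u v c : ℂ} (hu : 0 < cross u c * cross u v)
    (hv : 0 < cross v c * cross v u) :
    ∃ p q : ℝ, 0 < p ∧ 0 < q ∧ c = p * u + q * v := by
  have huv : cross u v ≠ 0 := by rintro h; simp [h] at hu
  have hvu : cross v u ≠ 0 := by rintro h; simp [h] at hv
  refine ⟨cross v c / cross v u, cross u c / cross u v, ?_, ?_, ?_⟩
  · rw [← mul_div_mul_right _ _ hvu]; exact div_pos hv (mul_self_pos.mpr hvu)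
  · rw [← mul_div_mul_right _ _ huv]; exact div_pos hu (mul_self_pos.mpr huv)
  · rw [cross_swap v u] at hvu ⊢
    apply Complex.ext <;> simp only [add_re, add_im, mul_re, mul_im, ofReal_re, ofReal_im] <;>
      field_simp <;> simp only [cross] <;> ring

/- A vanishing imaginary part forces `q q' = p p' |r|²`; the real part is then
`2 p p' Re r + (p q' + p' q)`, and `p q' + p' q ≥ 2 p p' |r| > 2 p p' |Re r|` by AM-GM. -/
lemma re_mul_div_pos_of_im_eq_zero {r : ℂ} (hr : r.im ≠ 0) {p q p' q' : ℝ} (hp : 0 < p)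
    (hq : 0 < q) (hp' : 0 < p') (hq' : 0 < q') (h : ((p * r + q) * (p' * r + q') / r).im = 0) :
    0 < ((p * r + q) * (p' * r + q') / r).re := by
  have hr0 : r ≠ 0 := fun h0 => hr (by simp [h0])
  have hx : (p * r + q) * (p' * r + q') / r = p * p' * r + q * q' * r⁻¹ + (p * q' + p' * q) := by
    field_simp
    ring
  have hN : 0 < normSq r := normSq_pos.mpr hr0
  rw [hx] at h ⊢
  simp only [add_re, add_im, mul_re, mul_im, ofReal_re, ofReal_im, inv_re, inv_im, mul_zero,
    zero_mul, sub_zero, add_zero] at h ⊢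
  have hbal : q * q' = p * p' * normSq r := by
    field_simp at h
    have h' : r.im * (q * q') = r.im * (p * p' * normSq r) := by linear_combination -h
    exact mul_left_cancel₀ hr h'
  have hre : r.re ^ 2 < normSq r := by
    rw [normSq_apply]; nlinarith [sq_pos_of_ne_zero hr]
  have hK : (2 * p * p' * r.re) ^ 2 < (p * q' + p' * q) ^ 2 := by
    have hpp : 0 < 4 * (p * p') ^ 2 := by positivity
    calc (2 * p * p' * r.re) ^ 2 = 4 * (p * p') ^ 2 * r.re ^ 2 := by ring
      _ < 4 * (p * p') ^ 2 * normSq r := mul_lt_mul_of_pos_left hre hpp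
      _ = 4 * (p * q') * (p' * q) := by linear_combination (-4 * p * p') * hbal
      _ ≤ (p * q' + p' * q) ^ 2 := by nlinarith [sq_nonneg (p * q' - p' * q)]
  have hK' : -(2 * p * p' * r.re) < p * q' + p' * q :=
    (abs_lt_of_sq_lt_sq' hK (by positivity)).1 |> neg_lt.mp
  calc (0 : ℝ) < 2 * p * p' * r.re + (p * q' + p' * q) := by linarith
    _ = _ := by rw [hbal]; field_simp; ring

lemma eq_zero_of_three_roots {A B C z₁ z₂ z₃ : ℂ} (h₁₂ : z₁ ≠ z₂) (h₁₃ : z₁ ≠ z₃)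
    (h₂₃ : z₂ ≠ z₃) (h₁ : A * z₁ ^ 2 + B * z₁ + C = 0) (h₂ : A * z₂ ^ 2 + B * z₂ + C = 0)
    (h₃ : A * z₃ ^ 2 + B * z₃ + C = 0) : A = 0 ∧ B = 0 ∧ C = 0 := by
  have e₁₂ : (z₁ - z₂) * (A * (z₁ + z₂) + B) = (z₁ - z₂) * 0 := by linear_combination h₁ - h₂
  have e₁₃ : (z₁ - z₃) * (A * (z₁ + z₃) + B) = (z₁ - z₃) * 0 := by linear_combination h₁ - h₃
  replace e₁₂ := mul_left_cancel₀ (sub_ne_zero.mpr h₁₂) e₁₂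
  replace e₁₃ := mul_left_cancel₀ (sub_ne_zero.mpr h₁₃) e₁₃
  have hA : (z₂ - z₃) * A = (z₂ - z₃) * 0 := by linear_combination e₁₂ - e₁₃
  obtain rfl := mul_left_cancel₀ (sub_ne_zero.mpr h₂₃) hA
  obtain rfl : B = 0 := by linear_combination e₁₂
  exact ⟨rfl, rfl, by linear_combination h₁⟩

lemma lagrange_quadratic {z₁ z₂ z₃ Z₁ Z₂ t₁ t₂ t₃ : ℂ} (h₁₂ : z₁ ≠ z₂) (h₁₃ : z₁ ≠ z₃)
    (h₂₃ : z₂ ≠ z₃) (h₁ : t₁ * ((z₁ - z₂) * (z₁ - z₃)) = (z₁ - Z₁) * (z₁ - Z₂))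
    (h₂ : t₂ * ((z₂ - z₁) * (z₂ - z₃)) = (z₂ - Z₁) * (z₂ - Z₂))
    (h₃ : t₃ * ((z₃ - z₁) * (z₃ - z₂)) = (z₃ - Z₁) * (z₃ - Z₂)) :
    t₁ + t₂ + t₃ = 1 ∧ ∀ z : ℂ,
      t₁ * (z - z₂) * (z - z₃) + t₂ * (z - z₁) * (z - z₃) + t₃ * (z - z₁) * (z - z₂) =
        (z - Z₁) * (z - Z₂) := by
  obtain ⟨hA, hB, hC⟩ := eq_zero_of_three_roots (A := t₁ + t₂ + t₃ - 1)
    (B := Z₁ + Z₂ - (t₁ * (z₂ + z₃) + t₂ * (z₁ + z₃) + t₃ * (z₁ + z₂)))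
    (C := t₁ * z₂ * z₃ + t₂ * z₁ * z₃ + t₃ * z₁ * z₂ - Z₁ * Z₂) h₁₂ h₁₃ h₂₃
    (by linear_combination h₁) (by linear_combination h₂) (by linear_combination h₃)
  exact ⟨by linear_combination hA, fun z => by linear_combination z ^ 2 * hA + z * hB + hC⟩

section Tangent

variable {F₁ F₂ : ℂ} {a : ℝ} {P Q ζ : ℂ}

lemma le_dist_add_dist_of_tangent (htan : EllipseSet F₁ F₂ a ∩ LineThrough P Q = {ζ})
    {z : ℂ} (hz : z ∈ LineThrough P Q) : 2 * a ≤ dist z F₁ + dist z F₂ := by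
  have hζ : ζ ∈ EllipseSet F₁ F₂ a ∩ LineThrough P Q := htan ▸ rfl
  by_contra! hlt
  have hzζ : z - ζ ≠ 0 := sub_ne_zero.mpr fun h => (h ▸ hlt).ne hζ.1
  obtain ⟨s, hs, hsE⟩ := exists_pos_dist_add_dist_eq hlt hzζ
  have hmem : z + s • (z - ζ) ∈ EllipseSet F₁ F₂ a ∩ LineThrough P Q :=
    ⟨hsE, add_smul_sub_mem_lineThrough hz hζ.2 s⟩
  rw [htan, mem_singleton_iff] at hmem
  have h0 : (1 + s) • (z - ζ) = 0 := by rw [add_smul, one_smul]; linear_combination hmem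
  exact hzζ ((smul_eq_zero.mp h0).resolve_left (by positivity))

lemma cross_ne_zero_of_tangent (hPQ : P ≠ Q) (htan : EllipseSet F₁ F₂ a ∩ LineThrough P Q = {ζ})
    {y : ℂ} (hy : dist y F₁ + dist y F₂ < 2 * a) : cross (Q - P) (y - P) ≠ 0 := fun h =>
  (le_dist_add_dist_of_tangent htan ((mem_lineThrough_iff_cross_eq_zero hPQ).mpr h)).not_gt hy

lemma cross_mul_cross_nonneg_of_tangent (hPQ : P ≠ Q)
    (htan : EllipseSet F₁ F₂ a ∩ LineThrough P Q = {ζ}) {x y : ℂ}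
    (hx : dist x F₁ + dist x F₂ ≤ 2 * a) (hy : dist y F₁ + dist y F₂ < 2 * a) :
    0 ≤ cross (Q - P) (x - P) * cross (Q - P) (y - P) := by
  by_contra! hneg
  obtain ⟨z, hz, hzL⟩ := exists_mem_openSegment_mem_lineThrough hPQ hneg
  exact (le_dist_add_dist_of_tangent htan hzL).not_gt
    (dist_add_dist_lt_of_mem_openSegment hx hy hz)

lemma dist_lineReflection_eq_of_tangent (hd : dist F₁ F₂ < 2 * a) (hPQ : P ≠ Q)
    (htan : EllipseSet F₁ F₂ a ∩ LineThrough P Q = {ζ}) :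
    dist (lineReflection P Q F₁) F₂ = 2 * a := by
  have hζ : ζ ∈ EllipseSet F₁ F₂ a ∩ LineThrough P Q := htan ▸ rfl
  set A := lineReflection P Q F₁
  apply le_antisymm
  · calc dist A F₂ ≤ dist ζ A + dist ζ F₂ := dist_triangle_left _ _ _
      _ = 2 * a := by rw [dist_lineReflection_of_mem hPQ F₁ hζ.2]; exact hζ.1
  · have hF₁ : dist F₁ F₁ + dist F₁ F₂ < 2 * a := by simpa using hd
    have hF₂ : dist F₂ F₁ + dist F₂ F₂ < 2 * a := by simpa [dist_comm] using hd
    have hside : cross (Q - P) (A - P) * cross (Q - P) (F₂ - P) < 0 := by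
      rw [cross_lineReflection hPQ, neg_mul, neg_lt_zero]
      exact (cross_mul_cross_nonneg_of_tangent hPQ htan hF₁.le hF₂).lt_of_ne'
        (mul_ne_zero (cross_ne_zero_of_tangent hPQ htan hF₁)
          (cross_ne_zero_of_tangent hPQ htan hF₂))
    obtain ⟨z, hz, hzL⟩ := exists_mem_openSegment_mem_lineThrough hPQ hside
    calc 2 * a ≤ dist z F₁ + dist z F₂ := le_dist_add_dist_of_tangent htan hzL
      _ = dist A z + dist z F₂ := by rw [← dist_lineReflection_of_mem hPQ F₁ hzL, dist_comm]
      _ = dist A F₂ := dist_add_dist_of_mem_segment (openSegment_subset_segment _ _ _ hz)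

/- The reflection of `F₁` in a line tangent at `ζ` is the point at distance `2 * a` from `F₂`
on the ray from `F₂` through `ζ`, so the reflections in two lines tangent at `ζ` coincide. -/
lemma cross_eq_zero_of_tangent_at (hd : dist F₁ F₂ < 2 * a) {X W : ℂ}
    (hX : EllipseSet F₁ F₂ a ∩ LineThrough ζ X = {ζ})
    (hW : EllipseSet F₁ F₂ a ∩ LineThrough ζ W = {ζ}) : cross (X - ζ) (W - ζ) = 0 := by
  rcases eq_or_ne ζ X with rfl | hζX
  · simp [cross]
  rcases eq_or_ne ζ W with rfl | hζW
  · simp [cross]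
  have hζ : ζ ∈ EllipseSet F₁ F₂ a ∩ LineThrough ζ X := hX ▸ rfl
  have hζE : dist ζ F₁ + dist ζ F₂ = 2 * a := hζ.1
  have ha : 2 * a ≠ 0 := (dist_nonneg.trans_lt hd).ne'
  have hζF₁ : ζ ≠ F₁ := by rintro rfl; simp at hζE; linarith
  have hζF₂ : ζ ≠ F₂ := by rintro rfl; simp [dist_comm] at hζE; linarith
  set r := dist F₂ ζ / (2 * a)
  have hon_ray : ∀ Y, ζ ≠ Y → EllipseSet F₁ F₂ a ∩ LineThrough ζ Y = {ζ} →
      ζ = AffineMap.lineMap F₂ (lineReflection ζ Y F₁) r := by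
    intro Y hζY htan
    have hA : dist F₂ (lineReflection ζ Y F₁) = 2 * a := by
      rw [dist_comm]; exact dist_lineReflection_eq_of_tangent hd hζY htan
    apply eq_lineMap_of_dist_eq_mul_of_dist_eq_mul
    · rw [hA, div_mul_cancel₀ _ ha]
    · rw [hA, dist_lineReflection_of_mem hζY F₁ ⟨0, by simp⟩, sub_mul, one_mul,
        div_mul_cancel₀ _ ha, dist_comm F₂]
      linarith
  have hrefl : lineReflection ζ X F₁ = lineReflection ζ W F₁ := by
    have h := (hon_ray X hζX hX).symm.trans (hon_ray W hζW hW)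
    simp only [AffineMap.lineMap_apply_module', add_left_inj] at h
    have hr : r ≠ 0 := div_ne_zero (dist_ne_zero.mpr hζF₂.symm) ha
    exact sub_left_injective (smul_right_injective ℂ hr h)
  have hconj : ∀ {z w : ℂ}, z ≠ w → conj (w - z) ≠ 0 := fun h =>
    (map_ne_zero _).mpr (sub_ne_zero.mpr h.symm)
  simp only [lineReflection, add_right_inj] at hrefl
  rw [div_eq_div_iff (hconj hζX) (hconj hζW)] at hrefl
  have h : (X - ζ) * conj (W - ζ) = (W - ζ) * conj (X - ζ) :=
    mul_right_cancel₀ (hconj hζF₁) (by linear_combination hrefl)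
  rw [cross_eq_im, ← conj_eq_iff_im, map_mul, conj_conj]
  linear_combination h

lemma cross_mul_cross_pos_of_tangent_sides (hd : dist F₁ F₂ < 2 * a) {X Y W ζ' y : ℂ}
    (hXYW : cross (Y - X) (W - X) ≠ 0) (hXY : EllipseSet F₁ F₂ a ∩ LineThrough X Y = {ζ})
    (hζ' : ζ' ∈ segment ℝ Y W) (hYW : EllipseSet F₁ F₂ a ∩ LineThrough Y W = {ζ'})
    (hy : dist y F₁ + dist y F₂ < 2 * a) :
    0 < cross (Y - X) (y - X) * cross (Y - X) (W - X) := by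
  have hXY' : X ≠ Y := by rintro rfl; simp [cross] at hXYW
  have hζ'E : ζ' ∈ EllipseSet F₁ F₂ a ∩ LineThrough Y W := hYW ▸ rfl
  replace hζ'E : ζ' ∈ EllipseSet F₁ F₂ a := hζ'E.1
  obtain ⟨s, t, -, ht, hst, rfl⟩ := hζ'
  have hcross : cross (Y - X) (s • Y + t • W - X) = t * cross (Y - X) (W - X) := by
    rw [← sub_eq_iff_eq_add.mpr hst.symm]
    simp only [cross, real_smul, sub_re, sub_im, add_re, add_im, mul_re, mul_im, ofReal_re,
      ofReal_im, ofReal_sub, ofReal_one, one_re, one_im]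
    ring
  -- If the point of contact on `YW` were `Y`, the ellipse would touch `XY` and `YW` at `Y`.
  have ht0 : t ≠ 0 := by
    rintro rfl
    obtain rfl : s = 1 := by linarith
    simp only [one_smul, zero_smul, add_zero] at hζ'E hYW
    obtain rfl : ζ = Y := by
      have hY : Y ∈ EllipseSet F₁ F₂ a ∩ LineThrough X Y := ⟨hζ'E, 1, by simp⟩
      rw [hXY] at hY
      exact hY.symm
    rw [lineThrough_comm] at hXY
    apply hXYW
    have h := cross_eq_zero_of_tangent_at hd hXY hYW
    simp only [cross, sub_re, sub_im] at h ⊢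
    linarith
  have hnonneg := cross_mul_cross_nonneg_of_tangent hXY' hXY hζ'E.le hy
  rw [hcross] at hnonneg
  have hprod : 0 ≤ t * (cross (Y - X) (y - X) * cross (Y - X) (W - X)) := by linarith
  exact ((mul_nonneg_iff_of_pos_left (ht.lt_of_ne' ht0)).mp hprod).lt_of_ne'
    (mul_ne_zero (cross_ne_zero_of_tangent hXY' hXY hy) hXYW)

lemma im_div_eq_zero_of_tangent (hd : dist F₁ F₂ < 2 * a) {V Y W ζ₁ ζ₂ : ℂ}
    (hVYW : cross (Y - V) (W - V) ≠ 0)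
    (hVY : EllipseSet F₁ F₂ a ∩ LineThrough V Y = {ζ₁})
    (hVW : EllipseSet F₁ F₂ a ∩ LineThrough V W = {ζ₂}) :
    ((F₁ - V) * (F₂ - V) / ((Y - V) * (W - V))).im = 0 := by
  have hVY' : V ≠ Y := by rintro rfl; simp [cross] at hVYW
  have hVW' : V ≠ W := by rintro rfl; simp [cross] at hVYW
  apply im_div_eq_zero_of_normSq_eq hVYW
  have hrefl : ∀ Z, (Z - V) * conj (F₁ - V) / conj (Z - V) - (F₂ - V)
      = lineReflection V Z F₁ - F₂ := fun Z => by unfold lineReflection; ring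
  rw [hrefl, hrefl, normSq_eq_norm_sq, normSq_eq_norm_sq, ← dist_eq, ← dist_eq,
    dist_lineReflection_eq_of_tangent hd hVY' hVY, dist_lineReflection_eq_of_tangent hd hVW' hVW]

lemma exists_pos_mul_eq_of_tangent_sides (hd : dist F₁ F₂ < 2 * a) {V Y W ζ₁ ζ₂ : ℂ}
    (hVYW : cross (Y - V) (W - V) ≠ 0)
    (hVY : EllipseSet F₁ F₂ a ∩ LineThrough V Y = {ζ₁})
    (hVW : EllipseSet F₁ F₂ a ∩ LineThrough V W = {ζ₂})
    (hζ : ζ ∈ segment ℝ Y W) (hYW : EllipseSet F₁ F₂ a ∩ LineThrough Y W = {ζ}) :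
    ∃ t : ℝ, 0 < t ∧ (t : ℂ) * ((V - Y) * (V - W)) = (V - F₁) * (V - F₂) := by
  have hVWY : cross (W - V) (Y - V) ≠ 0 := by rwa [cross_swap, neg_ne_zero]
  have hY : Y - V ≠ 0 := by rintro h; simp [h, cross] at hVYW
  have hW : W - V ≠ 0 := by rintro h; simp [h, cross] at hVYW
  have hcone : ∀ {F : ℂ}, dist F F₁ + dist F F₂ < 2 * a →
      ∃ p q : ℝ, 0 < p ∧ 0 < q ∧ F - V = p * (Y - V) + q * (W - V) := fun hF =>
    exists_pos_eq_mul_add_mul (cross_mul_cross_pos_of_tangent_sides hd hVYW hVY hζ hYW hF)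
      (cross_mul_cross_pos_of_tangent_sides hd hVWY hVW (segment_symm ℝ Y W ▸ hζ)
        (lineThrough_comm Y W ▸ hYW) hF)
  obtain ⟨p, q, hp, hq, hF₁⟩ := hcone (F := F₁) (by simpa using hd)
  obtain ⟨p', q', hp', hq', hF₂⟩ := hcone (F := F₂) (by simpa [dist_comm] using hd)
  set x := (F₁ - V) * (F₂ - V) / ((Y - V) * (W - V))
  have hreal : x.im = 0 := im_div_eq_zero_of_tangent hd hVYW hVY hVW
  set r := (Y - V) / (W - V)
  have hx : x = (p * r + q) * (p' * r + q') / r := by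
    simp only [x, r]
    rw [hF₁, hF₂]
    field_simp
  have hr : r.im ≠ 0 := by
    have him : r.im = cross (W - V) (Y - V) / normSq (W - V) := by
      simp only [r, div_im, cross]; ring
    rw [him]
    exact div_ne_zero hVWY (normSq_pos.mpr hW).ne'
  have hpos := re_mul_div_pos_of_im_eq_zero hr hp hq hp' hq' (hx ▸ hreal)
  refine ⟨x.re, hx ▸ hpos, ?_⟩
  have hxre : (x.re : ℂ) = x := Complex.ext rfl (by simp [hreal])
  rw [hxre, show (V - Y) * (V - W) = (Y - V) * (W - V) by ring,
    div_mul_cancel₀ _ (mul_ne_zero hY hW)]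
  ring

end Tangent

end Marden

open Marden

theorem marden_converse_general
    (z₁ z₂ z₃ : ℂ) (hnc : ¬ Collinear ℝ ({z₁, z₂, z₃} : Set ℂ))
    (E : Set ℂ) (Z₁ Z₂ : ℂ) (a : ℝ)
    (hE : IsEllipse E Z₁ Z₂ a)
    (h₁ : TangentToSide E z₂ z₃)
    (h₂ : TangentToSide E z₁ z₃)
    (h₃ : TangentToSide E z₁ z₂) :
    ∃ t₁ t₂ t₃ : ℝ, 0 < t₁ * t₂ * t₃ ∧ t₁ + t₂ + t₃ = 1 ∧
      ∀ z : ℂ,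
        (t₁ : ℂ) * (z - z₂) * (z - z₃) + (t₂ : ℂ) * (z - z₁) * (z - z₃) +
            (t₃ : ℂ) * (z - z₁) * (z - z₂) =
          (z - Z₁) * (z - Z₂) := by
  obtain ⟨hd, rfl⟩ := hE
  obtain ⟨ζ₁, hζ₁, ht₁⟩ := h₁
  obtain ⟨ζ₂, hζ₂, ht₂⟩ := h₂
  obtain ⟨ζ₃, hζ₃, ht₃⟩ := h₃
  have hc₁ := cross_ne_zero_of_not_collinear hnc
  have hc₂ := cross_ne_zero_of_not_collinear (A := z₂) (B := z₁) (C := z₃)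
    (by rwa [Set.insert_comm])
  have hc₃ := cross_ne_zero_of_not_collinear (A := z₃) (B := z₁) (C := z₂)
    (by rwa [Set.insert_comm, Set.pair_comm])
  obtain ⟨t₁, ht₁pos, e₁⟩ := exists_pos_mul_eq_of_tangent_sides hd hc₁ ht₃ ht₂ hζ₁ ht₁
  obtain ⟨t₂, ht₂pos, e₂⟩ :=
    exists_pos_mul_eq_of_tangent_sides hd hc₂ (lineThrough_comm z₁ z₂ ▸ ht₃) ht₁ hζ₂ ht₂
  obtain ⟨t₃, ht₃pos, e₃⟩ := exists_pos_mul_eq_of_tangent_sides hd hc₃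
    (lineThrough_comm z₁ z₃ ▸ ht₂) (lineThrough_comm z₂ z₃ ▸ ht₁) hζ₃ ht₃
  have hne : ∀ {A B C : ℂ}, cross (B - A) (C - A) ≠ 0 → A ≠ B ∧ A ≠ C := by
    intro A B C h
    constructor <;> rintro rfl <;> simp [cross] at h
  obtain ⟨hsum, hid⟩ := lagrange_quadratic (hne hc₁).1 (hne hc₁).2 (hne hc₂).2 e₁ e₂ e₃
  exact ⟨t₁, t₂, t₃, by positivity, by exact_mod_cast hsum, hid⟩

/-- **converse of Marden's theorem.** If a non-circular ellipse with foci
`Z₁, Z₂` is tangent to the three segments joining the distinct noncollinear points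
`z₁, z₂, z₃`, then there exist `t₁, t₂, t₃` with `t₁t₂t₃ > 0` and `t₁ + t₂ + t₃ = 1` such
that the zeros of `F(z) = t₁/(z − z₁) + t₂/(z − z₂) + t₃/(z − z₃)` (the roots of its monic
quadratic numerator) are exactly `Z₁` and `Z₂`. -/
theorem marden_converse
    (z₁ z₂ z₃ : ℂ) (hnc : ¬ Collinear ℝ ({z₁, z₂, z₃} : Set ℂ))
    (E : Set ℂ) (Z₁ Z₂ : ℂ) (a : ℝ)
    (hE : IsEllipse E Z₁ Z₂ a) (hncirc : Z₁ ≠ Z₂)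
    (h₁ : TangentToSide E z₂ z₃)
    (h₂ : TangentToSide E z₁ z₃)
    (h₃ : TangentToSide E z₁ z₂) :
    ∃ t₁ t₂ t₃ : ℝ, 0 < t₁ * t₂ * t₃ ∧ t₁ + t₂ + t₃ = 1 ∧
      ∀ z : ℂ,
        (t₁ : ℂ) * (z - z₂) * (z - z₃) + (t₂ : ℂ) * (z - z₁) * (z - z₃) +
            (t₃ : ℂ) * (z - z₁) * (z - z₂) =
          (z - Z₁) * (z - Z₂) :=
  marden_converse_general z₁ z₂ z₃ hnc E Z₁ Z₂ a hE h₁ h₂ h₃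
end
end
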